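/- arXiv:1410.7908 — 3 statements merged into one kernel-verified Lean document; each statement's English description precedes it below -/
import Mathlib

section
/- Laplacian of the Gauss map of the meridian surface of elliptic type: for all (u,v) ∈ I × J, ΔG = ((κ² − g′² − f²κ_m²)/f²)·(x∧y) − (κ′/f²)·(x∧n₁) − (κf′/f²)·(y∧n₁) + ((f·(fκ_m)′ − f′g′)/f²)·(y∧n₂), where f, g, κ_m and their derivatives are evaluated at u, and κ, κ′ at v. -/
noncomputable section

/-- The Minkowski inner product on `ℝ⁴` of signature `(3,1)`:
`⟨x,y⟩ = x₁y₁ + x₂y₂ + x₃y₃ − x₄y₄`. -/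
def mink (x y : Fin 4 → ℝ) : ℝ :=
  x 0 * y 0 + x 1 * y 1 + x 2 * y 2 - x 3 * y 3

/-- The fourth standard basis vector `e₄` of `ℝ⁴`. -/
def e4 : Fin 4 → ℝ := fun i => if i = 3 then 1 else 0

/-- The wedge product `a ∧ b`, an antisymmetric `4 × 4` real matrix with entries
`(a ∧ b)_{ij} = aᵢbⱼ − aⱼbᵢ`. -/
def wedge (a b : Fin 4 → ℝ) : Fin 4 → Fin 4 → ℝ :=
  fun i j => a i * b j - a j * b i

/-- Elliptic meridian data in Minkowski 4-space: nonempty open intervals `I, J ⊆ ℝ`,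
smooth functions `f, g : I → ℝ` with `f > 0` and `f′² − g′² = 1` on `I`, and smooth maps
`l, n : J → ℝ⁴` with values in the hyperplane `{x₄ = 0}` such that `⟨l,l⟩ ≡ 1`,
`⟨t,t⟩ ≡ 1` where `t := l′`, `⟨n,n⟩ ≡ 1`, `⟨l,n⟩ ≡ 0`, `⟨t,n⟩ ≡ 0` on `J`. -/
structure EllipticData where
  I : Set ℝ
  J : Set ℝ
  hI : IsOpen I
  hJ : IsOpen J
  hIne : I.Nonempty
  hJne : J.Nonempty
  hIconn : I.OrdConnected
  hJconn : J.OrdConnected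
  f : ℝ → ℝ
  g : ℝ → ℝ
  hf : ContDiffOn ℝ (⊤ : ℕ∞) f I
  hg : ContDiffOn ℝ (⊤ : ℕ∞) g I
  hfpos : ∀ u ∈ I, 0 < f u
  hunit : ∀ u ∈ I, (deriv f u) ^ 2 - (deriv g u) ^ 2 = 1
  l : ℝ → Fin 4 → ℝ
  n : ℝ → Fin 4 → ℝ
  hl : ContDiffOn ℝ (⊤ : ℕ∞) l J
  hn : ContDiffOn ℝ (⊤ : ℕ∞) n J
  hlplane : ∀ v ∈ J, l v 3 = 0
  hnplane : ∀ v ∈ J, n v 3 = 0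
  hll : ∀ v ∈ J, mink (l v) (l v) = 1
  htt : ∀ v ∈ J, mink (deriv l v) (deriv l v) = 1
  hnn : ∀ v ∈ J, mink (n v) (n v) = 1
  hln : ∀ v ∈ J, mink (l v) (n v) = 0
  htn : ∀ v ∈ J, mink (deriv l v) (n v) = 0

namespace EllipticData

variable (d : EllipticData)

/-- The unit tangent `t := l′` of the curve `c` on `S²(1)`. -/
def t : ℝ → Fin 4 → ℝ := fun v => deriv d.l v

/-- The spherical curvature `κ := ⟨t′, n⟩` of the curve `c`. -/
def kappa : ℝ → ℝ := fun v => mink (deriv d.t v) (d.n v)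

/-- The curvature `κ_m := f′g″ − g′f″` of the meridian curve `m`. -/
def kappaM : ℝ → ℝ := fun u =>
  deriv d.f u * deriv (deriv d.g) u - deriv d.g u * deriv (deriv d.f) u

/-- The meridian surface of elliptic type `z(u,v) := f(u)·l(v) + g(u)·e₄`. -/
def z : ℝ → ℝ → Fin 4 → ℝ := fun u v => d.f u • d.l v + d.g u • e4

/-- The tangent frame vector `x := f′·l + g′·e₄`. -/
def x : ℝ → ℝ → Fin 4 → ℝ := fun u v => deriv d.f u • d.l v + deriv d.g u • e4

/-- The normal frame vector `n₂ := g′·l + f′·e₄`. -/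
def n2 : ℝ → ℝ → Fin 4 → ℝ := fun u v => deriv d.g u • d.l v + deriv d.f u • e4

/-- The Gauss map `G := x ∧ y` (with `y = t`). -/
def G : ℝ → ℝ → Fin 4 → Fin 4 → ℝ := fun u v => wedge (d.x u v) (d.t v)

/-- The Laplacian of the Gauss map with respect to the induced metric `du² + f(u)²dv²`:
`ΔG := −(∂²G/∂u² + (1/f²)·∂²G/∂v² + (f′/f)·∂G/∂u)`, computed entrywise. -/
def lapG : ℝ → ℝ → Fin 4 → Fin 4 → ℝ := fun u v =>
  -(deriv (fun u' => deriv (fun u'' => d.G u'' v) u') u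
    + (1 / (d.f u) ^ 2) • deriv (fun v' => deriv (fun v'' => d.G u v'') v') v
    + (deriv d.f u / d.f u) • deriv (fun u' => d.G u' v) u)

/-- The mean curvature vector
`H := (1/2)(∂²z/∂u² + (1/f²)·∂²z/∂v² + (f′/f)·∂z/∂u)`. -/
def H : ℝ → ℝ → Fin 4 → ℝ := fun u v =>
  (1 / 2 : ℝ) • (deriv (fun u' => deriv (fun u'' => d.z u'' v) u') u
    + (1 / (d.f u) ^ 2) • deriv (fun v' => deriv (fun v'' => d.z u v'') v') v
    + (deriv d.f u / d.f u) • deriv (fun u' => d.z u' v) u)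

end EllipticData

open Filter in
lemma hasDerivAt_wedge {a b : ℝ → Fin 4 → ℝ} {a' b' : Fin 4 → ℝ} {v : ℝ}
    (ha : HasDerivAt a a' v) (hb : HasDerivAt b b' v) :
    HasDerivAt (fun w => wedge (a w) (b w)) (wedge a' (b v) + wedge (a v) b') v := by
  rw [hasDerivAt_pi]
  intro i
  rw [hasDerivAt_pi]
  intro j
  have hai := hasDerivAt_pi.1 ha i
  have haj := hasDerivAt_pi.1 ha j
  have hbi := hasDerivAt_pi.1 hb i
  have hbj := hasDerivAt_pi.1 hb j
  have := (hai.mul hbj).sub (haj.mul hbi)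
  convert this using 1
  · funext x; simp [wedge]
  · simp [wedge]; ring

lemma hasDerivAt_mink {a b : ℝ → Fin 4 → ℝ} {a' b' : Fin 4 → ℝ} {v : ℝ}
    (ha : HasDerivAt a a' v) (hb : HasDerivAt b b' v) :
    HasDerivAt (fun w => mink (a w) (b w)) (mink a' (b v) + mink (a v) b') v := by
  have h0 := (hasDerivAt_pi.1 ha 0).mul (hasDerivAt_pi.1 hb 0)
  have h1 := (hasDerivAt_pi.1 ha 1).mul (hasDerivAt_pi.1 hb 1)
  have h2 := (hasDerivAt_pi.1 ha 2).mul (hasDerivAt_pi.1 hb 2)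
  have h3 := (hasDerivAt_pi.1 ha 3).mul (hasDerivAt_pi.1 hb 3)
  have := ((h0.add h1).add h2).sub h3
  refine this.congr_deriv ?_
  simp [mink]
  ring

lemma mink_comm (a b : Fin 4 → ℝ) : mink a b = mink b a := by
  simp [mink]; ring

lemma ortho_complete {a b c p : Fin 4 → ℝ}
    (ha3 : a 3 = 0) (hb3 : b 3 = 0) (hc3 : c 3 = 0) (hp3 : p 3 = 0)
    (haa : mink a a = 1) (hbb : mink b b = 1) (hcc : mink c c = 1)
    (hab : mink a b = 0) (hac : mink a c = 0) (hbc : mink b c = 0) :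
    p = mink p a • a + mink p b • b + mink p c • c := by
  simp only [mink, ha3, hb3, hc3, mul_zero, sub_zero] at haa hbb hcc hab hac hbc
  set M : Matrix (Fin 3) (Fin 3) ℝ :=
    !![a 0, a 1, a 2; b 0, b 1, b 2; c 0, c 1, c 2] with hM
  have h1 : M * M.transpose = 1 := by
    ext i k
    fin_cases i <;> fin_cases k <;>
      simp [hM, Matrix.mul_apply, Matrix.transpose_apply, Matrix.vecHead, Matrix.vecTail,
        Fin.sum_univ_three, Matrix.one_fin_three, Matrix.transpose] <;>
      linarith [haa, hbb, hcc, hab, hac, hbc]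
  have h2 : M.transpose * M = 1 := mul_eq_one_comm.mp h1
  have key : ∀ i j : Fin 3, (M.transpose * M) i j = (1 : Matrix (Fin 3) (Fin 3) ℝ) i j :=
    fun i j => by rw [h2]
  have E00 : a 0 * a 0 + b 0 * b 0 + c 0 * c 0 = 1 := by
    have := key 0 0; simpa [hM, Matrix.mul_apply, Fin.sum_univ_three] using this
  have E11 : a 1 * a 1 + b 1 * b 1 + c 1 * c 1 = 1 := by
    have := key 1 1; simpa [hM, Matrix.mul_apply, Fin.sum_univ_three] using this
  have E22 : a 2 * a 2 + b 2 * b 2 + c 2 * c 2 = 1 := by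
    have := key 2 2; simpa [hM, Matrix.mul_apply, Fin.sum_univ_three] using this
  have E01 : a 0 * a 1 + b 0 * b 1 + c 0 * c 1 = 0 := by
    have := key 0 1; simpa [hM, Matrix.mul_apply, Fin.sum_univ_three] using this
  have E02 : a 0 * a 2 + b 0 * b 2 + c 0 * c 2 = 0 := by
    have := key 0 2; simpa [hM, Matrix.mul_apply, Fin.sum_univ_three] using this
  have E12 : a 1 * a 2 + b 1 * b 2 + c 1 * c 2 = 0 := by
    have := key 1 2; simpa [hM, Matrix.mul_apply, Fin.sum_univ_three] using this
  have P0 : p 0 = (mink p a • a + mink p b • b + mink p c • c) 0 := by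
    simp only [mink, hp3, ha3, hb3, hc3, mul_zero, sub_zero, Pi.add_apply, Pi.smul_apply,
      smul_eq_mul]
    linear_combination (-(p 0)) * E00 - p 1 * E01 - p 2 * E02
  have P1 : p 1 = (mink p a • a + mink p b • b + mink p c • c) 1 := by
    simp only [mink, hp3, ha3, hb3, hc3, mul_zero, sub_zero, Pi.add_apply, Pi.smul_apply,
      smul_eq_mul]
    linear_combination (-(p 0)) * E01 - p 1 * E11 - p 2 * E12
  have P2 : p 2 = (mink p a • a + mink p b • b + mink p c • c) 2 := by
    simp only [mink, hp3, ha3, hb3, hc3, mul_zero, sub_zero, Pi.add_apply, Pi.smul_apply,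
      smul_eq_mul]
    linear_combination (-(p 0)) * E02 - p 1 * E12 - p 2 * E22
  have P3 : p 3 = (mink p a • a + mink p b • b + mink p c • c) 3 := by
    simp [mink, hp3, ha3, hb3, hc3]
  funext i
  fin_cases i
  · exact P0
  · exact P1
  · exact P2
  · exact P3


lemma scalarA (F F1 F2 F3 G1 G2 G3 K : ℝ) (hF : F ≠ 0)
    (h1 : F1^2 - G1^2 = 1) (h2 : F1*F2 = G1*G2) (h3 : F2^2 + F1*F3 = G2^2 + G1*G3) :
    ((K^2 - G1^2 - F^2*(F1*G2-G1*F2)^2)/F^2) * F1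
      - ((F*(F1*(F1*G2-G1*F2) + F*(F2*G2 + F1*G3 - (G2*F2 + G1*F3))) - F1*G1)/F^2) * G1
      = -F3 - F1*F2/F + K^2*F1/F^2 := by
  rw [← sub_eq_zero]
  convert_to (0:ℝ) / F^2 = 0 using 1
  · field_simp
    linear_combination (-(F*F1*F2) + F^2*(F1*(F2^2-G2^2) - F3)) * h1
      + (F*F1^2 - F^2*F1*(F1*F2-G1*G2)) * h2 + (F^2*F1) * h3
  · simp

lemma scalarB (F F1 F2 F3 G1 G2 G3 K : ℝ) (hF : F ≠ 0)
    (h1 : F1^2 - G1^2 = 1) (h2 : F1*F2 = G1*G2) (h3 : F2^2 + F1*F3 = G2^2 + G1*G3) :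
    ((K^2 - G1^2 - F^2*(F1*G2-G1*F2)^2)/F^2) * G1
      - ((F*(F1*(F1*G2-G1*F2) + F*(F2*G2 + F1*G3 - (G2*F2 + G1*F3))) - F1*G1)/F^2) * F1
      = -G3 - F1*G2/F + (1+K^2)*G1/F^2 := by
  rw [← sub_eq_zero]
  convert_to (0:ℝ) / F^2 = 0 using 1
  · field_simp
    linear_combination (G1 - F*F1*G2 - F^2*(G3 + G1*(G2^2-F2^2))) * h1
      + (F*F1*G1 - F^2*G1*(F1*F2-G1*G2)) * h2 + (F^2*G1) * h3
  · simp

section AuxCalc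

lemma diffAt_of_cd {E : Type*} [NormedAddCommGroup E] [NormedSpace ℝ E] {f : ℝ → E}
    {S : Set ℝ} (hf : ContDiffOn ℝ (⊤ : ℕ∞) f S) (hS : IsOpen S) {w : ℝ} (hw : w ∈ S) :
    HasDerivAt f (deriv f w) w :=
  ((hf.differentiableOn (by simp)).differentiableAt (hS.mem_nhds hw)).hasDerivAt

lemma deriv_comp3_eq_zero {a : ℝ → Fin 4 → ℝ} {a' : Fin 4 → ℝ} {S : Set ℝ} (hS : IsOpen S)
    {v : ℝ} (hv : v ∈ S) (ha : HasDerivAt a a' v) (hz : ∀ w ∈ S, a w 3 = 0) : a' 3 = 0 := by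
  have h := hasDerivAt_pi.1 ha 3
  have h2 : HasDerivAt (fun _ : ℝ => (0:ℝ)) (a' 3) v :=
    h.congr_of_eventuallyEq
      (Filter.eventuallyEq_of_mem (hS.mem_nhds hv) fun w hw => (hz w hw).symm)
  exact (h2.unique (hasDerivAt_const v 0))

lemma deriv_mink_const {a b : ℝ → Fin 4 → ℝ} {a' b' : Fin 4 → ℝ} {S : Set ℝ} (hS : IsOpen S)
    {v : ℝ} (hv : v ∈ S) (ha : HasDerivAt a a' v) (hb : HasDerivAt b b' v) (r : ℝ)
    (hconst : ∀ w ∈ S, mink (a w) (b w) = r) :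
    mink a' (b v) + mink (a v) b' = 0 := by
  have h := hasDerivAt_mink ha hb
  have h2 : HasDerivAt (fun _ : ℝ => r) (mink a' (b v) + mink (a v) b') v :=
    h.congr_of_eventuallyEq
      (Filter.eventuallyEq_of_mem (hS.mem_nhds hv) fun w hw => (hconst w hw).symm)
  exact h2.unique (hasDerivAt_const v r)

lemma frenet_t (d : EllipticData) {v : ℝ} (hv : v ∈ d.J) :
    deriv (deriv d.l) v = -d.l v + d.kappa v • d.n v := by
  have hlD : ∀ w ∈ d.J, HasDerivAt d.l (deriv d.l w) w := fun w hw => diffAt_of_cd d.hl d.hJ hw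
  have hlts : ContDiffOn ℝ (⊤ : ℕ∞) (deriv d.l) d.J := d.hl.deriv_of_isOpen d.hJ (by simp)
  have htD : ∀ w ∈ d.J, HasDerivAt (deriv d.l) (deriv (deriv d.l) w) w :=
    fun w hw => diffAt_of_cd hlts d.hJ hw
  have ht3 : ∀ w ∈ d.J, deriv d.l w 3 = 0 := fun w hw =>
    deriv_comp3_eq_zero d.hJ hw (hlD w hw) d.hlplane
  have hp3 : deriv (deriv d.l) v 3 = 0 := deriv_comp3_eq_zero d.hJ hv (htD v hv) ht3
  have htl : ∀ w ∈ d.J, mink (deriv d.l w) (d.l w) = 0 := by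
    intro w hw
    have h := deriv_mink_const d.hJ hw (hlD w hw) (hlD w hw) 1 d.hll
    rw [mink_comm (d.l w)] at h
    linarith
  have ht'l : mink (deriv (deriv d.l) v) (d.l v) = -1 := by
    have h := deriv_mink_const d.hJ hv (htD v hv) (hlD v hv) 0 htl
    have h2 := d.htt v hv
    linarith
  have ht't : mink (deriv (deriv d.l) v) (deriv d.l v) = 0 := by
    have h := deriv_mink_const d.hJ hv (htD v hv) (htD v hv) 1 d.htt
    rw [mink_comm (deriv d.l v) (deriv (deriv d.l) v)] at h
    linarith
  have hkv : mink (deriv (deriv d.l) v) (d.n v) = d.kappa v := rfl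
  have hlt : mink (d.l v) (deriv d.l v) = 0 := by
    rw [mink_comm]; exact htl v hv
  have hmain := ortho_complete (d.hlplane v hv) (ht3 v hv) (d.hnplane v hv) hp3
    (d.hll v hv) (d.htt v hv) (d.hnn v hv) hlt (d.hln v hv) (d.htn v hv)
  rw [ht'l, ht't, hkv] at hmain
  rw [hmain]
  funext i
  simp

lemma frenet_n (d : EllipticData) {v : ℝ} (hv : v ∈ d.J) :
    deriv d.n v = -d.kappa v • deriv d.l v := by
  have hlD : ∀ w ∈ d.J, HasDerivAt d.l (deriv d.l w) w := fun w hw => diffAt_of_cd d.hl d.hJ hw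
  have hlts : ContDiffOn ℝ (⊤ : ℕ∞) (deriv d.l) d.J := d.hl.deriv_of_isOpen d.hJ (by simp)
  have htD : ∀ w ∈ d.J, HasDerivAt (deriv d.l) (deriv (deriv d.l) w) w :=
    fun w hw => diffAt_of_cd hlts d.hJ hw
  have hnD : ∀ w ∈ d.J, HasDerivAt d.n (deriv d.n w) w := fun w hw => diffAt_of_cd d.hn d.hJ hw
  have ht3 : ∀ w ∈ d.J, deriv d.l w 3 = 0 := fun w hw =>
    deriv_comp3_eq_zero d.hJ hw (hlD w hw) d.hlplane
  have hp3 : deriv d.n v 3 = 0 := deriv_comp3_eq_zero d.hJ hv (hnD v hv) d.hnplane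
  have hn'l : mink (deriv d.n v) (d.l v) = 0 := by
    have h := deriv_mink_const d.hJ hv (hlD v hv) (hnD v hv) 0 d.hln
    have h2 := d.htn v hv
    rw [mink_comm]
    linarith
  have hn't : mink (deriv d.n v) (deriv d.l v) = -d.kappa v := by
    have h := deriv_mink_const d.hJ hv (htD v hv) (hnD v hv) 0 d.htn
    have hkv : mink (deriv (deriv d.l) v) (d.n v) = d.kappa v := rfl
    rw [mink_comm]
    linarith [h, hkv]
  have hn'n : mink (deriv d.n v) (d.n v) = 0 := by
    have h := deriv_mink_const d.hJ hv (hnD v hv) (hnD v hv) 1 d.hnn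
    rw [mink_comm (d.n v)] at h
    linarith
  have hlt : mink (d.l v) (deriv d.l v) = 0 := by
    rw [mink_comm]
    have h := deriv_mink_const d.hJ hv (hlD v hv) (hlD v hv) 1 d.hll
    rw [mink_comm (d.l v)] at h
    linarith
  have hmain := ortho_complete (d.hlplane v hv) (ht3 v hv) (d.hnplane v hv) hp3
    (d.hll v hv) (d.htt v hv) (d.hnn v hv) hlt (d.hln v hv) (d.htn v hv)
  rw [hn'l, hn't, hn'n] at hmain
  rw [hmain]
  funext i
  simp

end AuxCalc

/-- **Laplacian of the Gauss map of the meridian surface of elliptic type**: for all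
`(u,v) ∈ I × J`,
`ΔG = ((κ² − g′² − f²κ_m²)/f²)·(x∧y) − (κ′/f²)·(x∧n₁) − (κf′/f²)·(y∧n₁)
      + ((f·(fκ_m)′ − f′g′)/f²)·(y∧n₂)`,
where `f, g, κ_m` and their derivatives are evaluated at `u` and `κ, κ′` at `v`
(with `y = t`, `n₁ = n`). -/
theorem laplacian_gauss_map_elliptic (d : EllipticData) :
    ∀ u ∈ d.I, ∀ v ∈ d.J,
      d.lapG u v =
        ((d.kappa v ^ 2 - (deriv d.g u) ^ 2 - (d.f u) ^ 2 * (d.kappaM u) ^ 2) / (d.f u) ^ 2)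
            • wedge (d.x u v) (d.t v)
        - (deriv d.kappa v / (d.f u) ^ 2) • wedge (d.x u v) (d.n v)
        - (d.kappa v * deriv d.f u / (d.f u) ^ 2) • wedge (d.t v) (d.n v)
        + ((d.f u * deriv (fun u' => d.f u' * d.kappaM u') u - deriv d.f u * deriv d.g u)
              / (d.f u) ^ 2) • wedge (d.t v) (d.n2 u v) := by
  intro u hu v hv
  -- smoothness packages on I
  have hf1s : ContDiffOn ℝ (⊤ : ℕ∞) (deriv d.f) d.I := d.hf.deriv_of_isOpen d.hI (by simp)
  have hf2s : ContDiffOn ℝ (⊤ : ℕ∞) (deriv (deriv d.f)) d.I := hf1s.deriv_of_isOpen d.hI (by simp)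
  have hg1s : ContDiffOn ℝ (⊤ : ℕ∞) (deriv d.g) d.I := d.hg.deriv_of_isOpen d.hI (by simp)
  have hg2s : ContDiffOn ℝ (⊤ : ℕ∞) (deriv (deriv d.g)) d.I := hg1s.deriv_of_isOpen d.hI (by simp)
  have hfD : ∀ w ∈ d.I, HasDerivAt d.f (deriv d.f w) w := fun w hw => diffAt_of_cd d.hf d.hI hw
  have hf1D : ∀ w ∈ d.I, HasDerivAt (deriv d.f) (deriv (deriv d.f) w) w :=
    fun w hw => diffAt_of_cd hf1s d.hI hw
  have hf2D : ∀ w ∈ d.I, HasDerivAt (deriv (deriv d.f)) (deriv (deriv (deriv d.f)) w) w :=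
    fun w hw => diffAt_of_cd hf2s d.hI hw
  have hgD : ∀ w ∈ d.I, HasDerivAt d.g (deriv d.g w) w := fun w hw => diffAt_of_cd d.hg d.hI hw
  have hg1D : ∀ w ∈ d.I, HasDerivAt (deriv d.g) (deriv (deriv d.g) w) w :=
    fun w hw => diffAt_of_cd hg1s d.hI hw
  have hg2D : ∀ w ∈ d.I, HasDerivAt (deriv (deriv d.g)) (deriv (deriv (deriv d.g)) w) w :=
    fun w hw => diffAt_of_cd hg2s d.hI hw
  -- smoothness packages on J
  have hlts : ContDiffOn ℝ (⊤ : ℕ∞) (deriv d.l) d.J := d.hl.deriv_of_isOpen d.hJ (by simp)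
  have ht1s : ContDiffOn ℝ (⊤ : ℕ∞) (deriv (deriv d.l)) d.J := hlts.deriv_of_isOpen d.hJ (by simp)
  have hlD : ∀ w ∈ d.J, HasDerivAt d.l (deriv d.l w) w := fun w hw => diffAt_of_cd d.hl d.hJ hw
  have htD : ∀ w ∈ d.J, HasDerivAt (deriv d.l) (deriv (deriv d.l) w) w :=
    fun w hw => diffAt_of_cd hlts d.hJ hw
  have ht1D : HasDerivAt (deriv (deriv d.l)) (deriv (deriv (deriv d.l)) v) v :=
    diffAt_of_cd ht1s d.hJ hv
  have hnD : ∀ w ∈ d.J, HasDerivAt d.n (deriv d.n w) w := fun w hw => diffAt_of_cd d.hn d.hJ hw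
  have hkD : HasDerivAt d.kappa (deriv d.kappa v) v :=
    (hasDerivAt_mink ht1D (hnD v hv)).differentiableAt.hasDerivAt
  -- scalar relations at u
  have hF : d.f u ≠ 0 := ne_of_gt (d.hfpos u hu)
  have h1 : (deriv d.f u) ^ 2 - (deriv d.g u) ^ 2 = 1 := d.hunit u hu
  have h2' : ∀ w ∈ d.I,
      deriv d.f w * deriv (deriv d.f) w = deriv d.g w * deriv (deriv d.g) w := by
    intro w hw
    have hps : HasDerivAt (fun w' => (deriv d.f w') ^ 2 - (deriv d.g w') ^ 2)
        ((2 : ℕ) * (deriv d.f w) ^ 1 * deriv (deriv d.f) w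
          - (2 : ℕ) * (deriv d.g w) ^ 1 * deriv (deriv d.g) w) w :=
      ((hf1D w hw).pow 2).sub ((hg1D w hw).pow 2)
    have h0 : HasDerivAt (fun _ : ℝ => (1 : ℝ))
        ((2 : ℕ) * (deriv d.f w) ^ 1 * deriv (deriv d.f) w
          - (2 : ℕ) * (deriv d.g w) ^ 1 * deriv (deriv d.g) w) w :=
      hps.congr_of_eventuallyEq
        (Filter.eventuallyEq_of_mem (d.hI.mem_nhds hw) fun z hz => (d.hunit z hz).symm)
    have hz := h0.unique (hasDerivAt_const w 1)
    simp at hz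
    linarith
  have h2 := h2' u hu
  have h3 : (deriv (deriv d.f) u) ^ 2 + deriv d.f u * deriv (deriv (deriv d.f)) u
      = (deriv (deriv d.g) u) ^ 2 + deriv d.g u * deriv (deriv (deriv d.g)) u := by
    have hps : HasDerivAt
        (fun w => deriv d.f w * deriv (deriv d.f) w - deriv d.g w * deriv (deriv d.g) w)
        (deriv (deriv d.f) u * deriv (deriv d.f) u
            + deriv d.f u * deriv (deriv (deriv d.f)) u
          - (deriv (deriv d.g) u * deriv (deriv d.g) u
            + deriv d.g u * deriv (deriv (deriv d.g)) u)) u :=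
      ((hf1D u hu).mul (hf2D u hu)).sub ((hg1D u hu).mul (hg2D u hu))
    have h0 : HasDerivAt (fun _ : ℝ => (0 : ℝ))
        (deriv (deriv d.f) u * deriv (deriv d.f) u
            + deriv d.f u * deriv (deriv (deriv d.f)) u
          - (deriv (deriv d.g) u * deriv (deriv d.g) u
            + deriv d.g u * deriv (deriv (deriv d.g)) u)) u :=
      hps.congr_of_eventuallyEq
        (Filter.eventuallyEq_of_mem (d.hI.mem_nhds hu)
          fun z hz => (sub_eq_zero_of_eq (h2' z hz)).symm)
    have hz := h0.unique (hasDerivAt_const u 0)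
    linear_combination hz
  -- u-derivatives of G
  have hGfun : (fun u'' => d.G u'' v)
      = fun u'' => deriv d.f u'' • wedge (d.l v) (deriv d.l v)
          + deriv d.g u'' • wedge e4 (deriv d.l v) := by
    funext w i j
    simp [EllipticData.G, EllipticData.x, EllipticData.t, wedge]
    ring
  have hGu : ∀ w ∈ d.I, deriv (fun u'' => d.G u'' v) w
      = deriv (deriv d.f) w • wedge (d.l v) (deriv d.l v)
        + deriv (deriv d.g) w • wedge e4 (deriv d.l v) := by
    intro w hw
    rw [hGfun]
    exact (((hf1D w hw).smul_const _).add ((hg1D w hw).smul_const _)).deriv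
  have hGuu : deriv (fun u' => deriv (fun u'' => d.G u'' v) u') u
      = deriv (deriv (deriv d.f)) u • wedge (d.l v) (deriv d.l v)
        + deriv (deriv (deriv d.g)) u • wedge e4 (deriv d.l v) := by
    have hH : HasDerivAt
        (fun w => deriv (deriv d.f) w • wedge (d.l v) (deriv d.l v)
          + deriv (deriv d.g) w • wedge e4 (deriv d.l v))
        (deriv (deriv (deriv d.f)) u • wedge (d.l v) (deriv d.l v)
          + deriv (deriv (deriv d.g)) u • wedge e4 (deriv d.l v)) u :=
      ((hf2D u hu).smul_const _).add ((hg2D u hu).smul_const _)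
    exact (hH.congr_of_eventuallyEq
      (Filter.eventuallyEq_of_mem (d.hI.mem_nhds hu) fun w hw => hGu w hw)).deriv
  -- v-derivatives of G
  have hxD : ∀ w ∈ d.J, HasDerivAt (fun w' => d.x u w') (deriv d.f u • deriv d.l w) w := by
    intro w hw
    have h := ((hlD w hw).const_smul (deriv d.f u)).add_const (deriv d.g u • e4)
    simpa [EllipticData.x] using h
  have hGv : ∀ w ∈ d.J, deriv (fun w' => d.G u w') w
      = wedge (d.x u w) (deriv (deriv d.l) w) := by
    intro w hw
    have h2 : HasDerivAt (fun w' => d.G u w')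
        (wedge (deriv d.f u • deriv d.l w) (deriv d.l w)
          + wedge (d.x u w) (deriv (deriv d.l) w)) w :=
      hasDerivAt_wedge (hxD w hw) (htD w hw)
    have hz : wedge (deriv d.f u • deriv d.l w) (deriv d.l w) = 0 := by
      funext i j; simp [wedge]; ring
    rw [hz, zero_add] at h2
    exact h2.deriv
  have hGvv : deriv (fun v' => deriv (fun v'' => d.G u v'') v') v
      = wedge (deriv d.f u • deriv d.l v) (deriv (deriv d.l) v)
        + wedge (d.x u v) (deriv (deriv (deriv d.l)) v) := by
    have hH : HasDerivAt (fun w => wedge (d.x u w) (deriv (deriv d.l) w))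
        (wedge (deriv d.f u • deriv d.l v) (deriv (deriv d.l) v)
          + wedge (d.x u v) (deriv (deriv (deriv d.l)) v)) v :=
      hasDerivAt_wedge (hxD v hv) ht1D
    exact (hH.congr_of_eventuallyEq
      (Filter.eventuallyEq_of_mem (d.hJ.mem_nhds hv) fun w hw => hGv w hw)).deriv
  -- Frenet substitutions
  have hT1 : deriv (deriv d.l) v = -d.l v + d.kappa v • d.n v := frenet_t d hv
  have hT2 : deriv (deriv (deriv d.l)) v
      = -(deriv d.l v) + (d.kappa v • (-d.kappa v • deriv d.l v)
          + deriv d.kappa v • d.n v) := by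
    have hdd : HasDerivAt (fun w => -d.l w + d.kappa w • d.n w)
        (-(deriv d.l v) + (d.kappa v • deriv d.n v + deriv d.kappa v • d.n v)) v :=
      ((hlD v hv).neg).add (hkD.smul (hnD v hv))
    have h2 := hdd.congr_of_eventuallyEq
      (Filter.eventuallyEq_of_mem (d.hJ.mem_nhds hv) fun w hw => frenet_t d hw)
    rw [frenet_n d hv] at h2
    exact h2.deriv
  -- derivative of f·κ_m
  have hKmD : deriv (fun u' => d.f u' * d.kappaM u') u
      = deriv d.f u * d.kappaM u
        + d.f u * (deriv (deriv d.f) u * deriv (deriv d.g) u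
            + deriv d.f u * deriv (deriv (deriv d.g)) u
          - (deriv (deriv d.g) u * deriv (deriv d.f) u
            + deriv d.g u * deriv (deriv (deriv d.f)) u)) := by
    have hkm : HasDerivAt d.kappaM
        (deriv (deriv d.f) u * deriv (deriv d.g) u
            + deriv d.f u * deriv (deriv (deriv d.g)) u
          - (deriv (deriv d.g) u * deriv (deriv d.f) u
            + deriv d.g u * deriv (deriv (deriv d.f)) u)) u :=
      ((hf1D u hu).mul (hg2D u hu)).sub ((hg1D u hu).mul (hf2D u hu))
    exact ((hfD u hu).mul hkm).deriv
  -- scalar identities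
  have hA := scalarA (d.f u) (deriv d.f u) (deriv (deriv d.f) u) (deriv (deriv (deriv d.f)) u)
    (deriv d.g u) (deriv (deriv d.g) u) (deriv (deriv (deriv d.g)) u) (d.kappa v) hF h1 h2 h3
  have hB := scalarB (d.f u) (deriv d.f u) (deriv (deriv d.f) u) (deriv (deriv (deriv d.f)) u)
    (deriv d.g u) (deriv (deriv d.g) u) (deriv (deriv (deriv d.g)) u) (d.kappa v) hF h1 h2 h3
  -- assemble
  show -(deriv (fun u' => deriv (fun u'' => d.G u'' v) u') u
      + (1 / (d.f u) ^ 2) • deriv (fun v' => deriv (fun v'' => d.G u v'') v') v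
      + (deriv d.f u / d.f u) • deriv (fun u' => d.G u' v) u) = _
  rw [hGuu, hGvv, hGu u hu, hT1, hT2, hKmD]
  simp only [EllipticData.kappaM, EllipticData.t]
  calc
    -((deriv (deriv (deriv d.f)) u • wedge (d.l v) (deriv d.l v)
          + deriv (deriv (deriv d.g)) u • wedge e4 (deriv d.l v))
        + (1 / (d.f u) ^ 2) •
          (wedge (deriv d.f u • deriv d.l v) (-d.l v + d.kappa v • d.n v)
            + wedge (d.x u v) (-(deriv d.l v)
                + (d.kappa v • (-d.kappa v • deriv d.l v) + deriv d.kappa v • d.n v)))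
        + (deriv d.f u / d.f u) •
          (deriv (deriv d.f) u • wedge (d.l v) (deriv d.l v)
            + deriv (deriv d.g) u • wedge e4 (deriv d.l v)))
      = (-deriv (deriv (deriv d.f)) u
            - deriv d.f u * deriv (deriv d.f) u / d.f u
            + d.kappa v ^ 2 * deriv d.f u / (d.f u) ^ 2) • wedge (d.l v) (deriv d.l v)
        + (-deriv (deriv (deriv d.g)) u
            - deriv d.f u * deriv (deriv d.g) u / d.f u
            + (1 + d.kappa v ^ 2) * deriv d.g u / (d.f u) ^ 2) • wedge e4 (deriv d.l v)
        - (deriv d.kappa v / (d.f u) ^ 2) • wedge (d.x u v) (d.n v)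
        - (d.kappa v * deriv d.f u / (d.f u) ^ 2) • wedge (deriv d.l v) (d.n v) := by
        funext i j
        simp only [EllipticData.x, wedge, Pi.add_apply, Pi.sub_apply, Pi.neg_apply,
          Pi.smul_apply, smul_eq_mul, neg_mul, mul_neg]
        ring
    _ = ((d.kappa v ^ 2 - (deriv d.g u) ^ 2
            - (d.f u) ^ 2 * (deriv d.f u * deriv (deriv d.g) u
                - deriv d.g u * deriv (deriv d.f) u) ^ 2) / (d.f u) ^ 2)
            • wedge (d.x u v) (deriv d.l v)
        - (deriv d.kappa v / (d.f u) ^ 2) • wedge (d.x u v) (d.n v)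
        - (d.kappa v * deriv d.f u / (d.f u) ^ 2) • wedge (deriv d.l v) (d.n v)
        + ((d.f u * (deriv d.f u * (deriv d.f u * deriv (deriv d.g) u
                  - deriv d.g u * deriv (deriv d.f) u)
              + d.f u * (deriv (deriv d.f) u * deriv (deriv d.g) u
                  + deriv d.f u * deriv (deriv (deriv d.g)) u
                - (deriv (deriv d.g) u * deriv (deriv d.f) u
                  + deriv d.g u * deriv (deriv (deriv d.f)) u)))
              - deriv d.f u * deriv d.g u) / (d.f u) ^ 2)
            • wedge (deriv d.l v) (d.n2 u v) := by
        rw [← hA, ← hB]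
        funext i j
        simp only [EllipticData.x, EllipticData.n2, wedge, Pi.add_apply, Pi.sub_apply,
          Pi.neg_apply, Pi.smul_apply, smul_eq_mul, neg_mul, mul_neg]
        ring
end
end

section
/- Meridian surfaces of elliptic type with harmonic Gauss map (Theorem 4.1): ΔG = 0 at every point of I × J if and only if κ ≡ 0 on J and g′ ≡ 0 on I; moreover, in that case κ_m ≡ 0 on I as well, i.e. the surface is totally geodesic (part of a plane). -/
noncomputable section

/-! ### Auxiliary machinery -/

def eta : Fin 4 → ℝ := fun i => if i = 3 then -1 else 1

def phi (M : Fin 4 → Fin 4 → ℝ) (a b : Fin 4 → ℝ) : ℝ :=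
  ∑ i, ∑ j, eta i * eta j * a i * b j * M i j

lemma phi_wedge (p q a b : Fin 4 → ℝ) :
    phi (wedge p q) a b = mink a p * mink b q - mink a q * mink b p := by
  simp [phi, wedge, mink, eta, Fin.sum_univ_four]; ring

lemma mink_comb (a x y : Fin 4 → ℝ) (r s : ℝ) :
    mink a (r • x + s • y) = r * mink a x + s * mink a y := by
  simp [mink, Pi.add_apply, Pi.smul_apply, smul_eq_mul]; ring

lemma mink_smul (a x : Fin 4 → ℝ) (r : ℝ) : mink a (r • x) = r * mink a x := by
  simp [mink, Pi.smul_apply, smul_eq_mul]; ring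

lemma mink_e4_right (a : Fin 4 → ℝ) : mink a e4 = -a 3 := by simp [mink, e4]

lemma HasDerivAt.eval {F : ℝ → Fin 4 → ℝ} {F' : Fin 4 → ℝ} {x : ℝ}
    (h : HasDerivAt F F' x) (i : Fin 4) : HasDerivAt (fun y => F y i) (F' i) x :=
  hasDerivAt_pi.mp h i

lemma hasDerivAt_matrix {F : ℝ → Fin 4 → Fin 4 → ℝ} {F' : Fin 4 → Fin 4 → ℝ} {x : ℝ}
    (h : ∀ i j, HasDerivAt (fun y => F y i j) (F' i j) x) : HasDerivAt F F' x :=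
  hasDerivAt_pi.mpr fun i => hasDerivAt_pi.mpr fun j => h i j

lemma HasDerivAt.congr_d {E : Type*}
    [NormedAddCommGroup E] [NormedSpace ℝ E] {f : ℝ → E} {a b : E} {x : ℝ}
    (h : HasDerivAt f a x) (e : a = b) : HasDerivAt f b x := e ▸ h

lemma HasDerivAt.mink' {a b : ℝ → Fin 4 → ℝ} {a' b' : Fin 4 → ℝ} {x : ℝ}
    (ha : HasDerivAt a a' x) (hb : HasDerivAt b b' x) :
    HasDerivAt (fun y => mink (a y) (b y)) (mink a' (b x) + mink (a x) b') x := by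
  have h : HasDerivAt (fun y => a y 0 * b y 0 + a y 1 * b y 1 + a y 2 * b y 2 - a y 3 * b y 3)
      ((a' 0 * b x 0 + a x 0 * b' 0) + (a' 1 * b x 1 + a x 1 * b' 1)
        + (a' 2 * b x 2 + a x 2 * b' 2) - (a' 3 * b x 3 + a x 3 * b' 3)) x :=
    ((((ha.eval 0).mul (hb.eval 0)).add ((ha.eval 1).mul (hb.eval 1))).add
      ((ha.eval 2).mul (hb.eval 2))).sub ((ha.eval 3).mul (hb.eval 3))
  exact h.congr_d (by simp [mink]; ring)

lemma contDiffOn_deriv' {E : Type*} [NormedAddCommGroup E] [NormedSpace ℝ E]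
    {F : ℝ → E} {s : Set ℝ} (hs : IsOpen s) (h : ContDiffOn ℝ (⊤ : ℕ∞) F s) :
    ContDiffOn ℝ (⊤ : ℕ∞) (deriv F) s :=
  h.deriv_of_isOpen hs (by simp)

lemma hasDerivAt_of_contDiffOn {E : Type*} [NormedAddCommGroup E] [NormedSpace ℝ E]
    {F : ℝ → E} {s : Set ℝ} (hs : IsOpen s) (h : ContDiffOn ℝ (⊤ : ℕ∞) F s) {x : ℝ} (hx : x ∈ s) :
    HasDerivAt F (deriv F x) x :=
  ((h.differentiableOn (by simp)).differentiableAt (hs.mem_nhds hx)).hasDerivAt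

lemma eventEq {α : Type*} {s : Set ℝ} (hs : IsOpen s) {x : ℝ} (hx : x ∈ s)
    {F G : ℝ → α} (h : ∀ y ∈ s, F y = G y) : F =ᶠ[nhds x] G :=
  Filter.eventually_of_mem (hs.mem_nhds hx) h

set_option maxHeartbeats 1000000 in
lemma frame_expand (l t n w : Fin 4 → ℝ)
    (hl3 : l 3 = 0) (ht3 : t 3 = 0) (hn3 : n 3 = 0) (hw3 : w 3 = 0)
    (hll : mink l l = 1) (htt : mink t t = 1) (hnn : mink n n = 1)
    (hlt : mink l t = 0) (hln : mink l n = 0) (htn : mink t n = 0) :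
    w = mink w l • l + mink w t • t + mink w n • n := by
  classical
  set r : Fin 4 → Fin 4 → ℝ := ![l, t, n, e4] with hr
  set B : Matrix (Fin 4) (Fin 4) ℝ := Matrix.of fun i j => r i j * eta j with hB
  set C : Matrix (Fin 4) (Fin 4) ℝ := Matrix.of fun i j => r j i * eta j with hC
  have hBC : B * C = 1 := by
    ext i j
    simp only [Matrix.mul_apply, Fin.sum_univ_four, hB, hC, Matrix.of_apply, Matrix.one_apply]
    simp only [mink] at hll htt hnn hlt hln htn
    fin_cases i <;> fin_cases j <;>
      simp [hr, eta, e4, Matrix.cons_val_zero, Matrix.cons_val_one] <;>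
      linarith [hll, htt, hnn, hlt, hln, htn, hl3, ht3, hn3]
  have hCB : C * B = 1 := mul_eq_one_comm.mp hBC
  have key : (C * B).mulVec w = w := by rw [hCB]; simp
  rw [← Matrix.mulVec_mulVec] at key
  funext i
  have := congrFun key i
  simp only [Matrix.mulVec, dotProduct, Fin.sum_univ_four, hB, hC, Matrix.of_apply] at this
  simp only [Pi.add_apply, Pi.smul_apply, smul_eq_mul]
  rw [← this]
  simp [hr, eta, e4, mink, hw3]
  ring
/-! ### The derivative computation -/

lemma lapG_formula (d : EllipticData) {u v : ℝ} (hu : u ∈ d.I) (hv : v ∈ d.J) :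
    d.lapG u v =
      -( wedge (deriv (deriv (deriv d.f)) u • d.l v + deriv (deriv (deriv d.g)) u • e4) (d.t v)
        + (1 / (d.f u) ^ 2) •
            (wedge (deriv d.f u • d.t v) (deriv d.t v) + wedge (d.x u v) (deriv (deriv d.t) v))
        + (deriv d.f u / d.f u) •
            wedge (deriv (deriv d.f) u • d.l v + deriv (deriv d.g) u • e4) (d.t v)) := by
  -- smoothness chains
  have cf1 : ContDiffOn ℝ (⊤ : ℕ∞) (deriv d.f) d.I := contDiffOn_deriv' d.hI d.hf
  have cf2 : ContDiffOn ℝ (⊤ : ℕ∞) (deriv (deriv d.f)) d.I := contDiffOn_deriv' d.hI cf1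
  have cg1 : ContDiffOn ℝ (⊤ : ℕ∞) (deriv d.g) d.I := contDiffOn_deriv' d.hI d.hg
  have cg2 : ContDiffOn ℝ (⊤ : ℕ∞) (deriv (deriv d.g)) d.I := contDiffOn_deriv' d.hI cg1
  have cl1 : ContDiffOn ℝ (⊤ : ℕ∞) d.t d.J := contDiffOn_deriv' d.hJ d.hl
  have cl2 : ContDiffOn ℝ (⊤ : ℕ∞) (deriv d.t) d.J := contDiffOn_deriv' d.hJ cl1
  -- first u-derivative of G, at every point of I
  have S1 : ∀ u' ∈ d.I, HasDerivAt (fun y => d.G y v)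
      (wedge (deriv (deriv d.f) u' • d.l v + deriv (deriv d.g) u' • e4) (d.t v)) u' := by
    intro u' hu'
    have hF : HasDerivAt (deriv d.f) (deriv (deriv d.f) u') u' :=
      hasDerivAt_of_contDiffOn d.hI cf1 hu'
    have hG : HasDerivAt (deriv d.g) (deriv (deriv d.g) u') u' :=
      hasDerivAt_of_contDiffOn d.hI cg1 hu'
    apply hasDerivAt_matrix
    intro i j
    exact (((hF.mul_const (d.l v i)).add (hG.mul_const (e4 i))).mul_const (d.t v j)).sub
      (((hF.mul_const (d.l v j)).add (hG.mul_const (e4 j))).mul_const (d.t v i))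
  -- second u-derivative at u
  have S2 : deriv (fun u' => deriv (fun u'' => d.G u'' v) u') u =
      wedge (deriv (deriv (deriv d.f)) u • d.l v + deriv (deriv (deriv d.g)) u • e4) (d.t v) := by
    have hev : (fun u' => deriv (fun u'' => d.G u'' v) u') =ᶠ[nhds u]
        (fun u' => wedge (deriv (deriv d.f) u' • d.l v + deriv (deriv d.g) u' • e4) (d.t v)) :=
      eventEq d.hI hu fun y hy => (S1 y hy).deriv
    rw [hev.deriv_eq]
    have hF : HasDerivAt (deriv (deriv d.f)) (deriv (deriv (deriv d.f)) u) u :=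
      hasDerivAt_of_contDiffOn d.hI cf2 hu
    have hG : HasDerivAt (deriv (deriv d.g)) (deriv (deriv (deriv d.g)) u) u :=
      hasDerivAt_of_contDiffOn d.hI cg2 hu
    refine HasDerivAt.deriv (hasDerivAt_matrix fun i j => ?_)
    exact (((hF.mul_const (d.l v i)).add (hG.mul_const (e4 i))).mul_const (d.t v j)).sub
      (((hF.mul_const (d.l v j)).add (hG.mul_const (e4 j))).mul_const (d.t v i))
  -- first v-derivative of G, at every point of J
  have S3 : ∀ v' ∈ d.J, HasDerivAt (fun y => d.G u y)
      (wedge (d.x u v') (deriv d.t v')) v' := by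
    intro v' hv'
    have hL : HasDerivAt d.l (d.t v') v' := hasDerivAt_of_contDiffOn d.hJ d.hl hv'
    have hT : HasDerivAt d.t (deriv d.t v') v' := hasDerivAt_of_contDiffOn d.hJ cl1 hv'
    apply hasDerivAt_matrix
    intro i j
    have h := ((((hL.eval i).const_mul (deriv d.f u)).add
          (hasDerivAt_const v' (deriv d.g u * e4 i))).mul (hT.eval j)).sub
        ((((hL.eval j).const_mul (deriv d.f u)).add
          (hasDerivAt_const v' (deriv d.g u * e4 j))).mul (hT.eval i))
    refine (h.congr_d ?_)
    simp only [wedge, EllipticData.x, Pi.add_apply, Pi.smul_apply, smul_eq_mul]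
    ring
  -- second v-derivative at v
  have S4 : deriv (fun v' => deriv (fun v'' => d.G u v'') v') v =
      wedge (deriv d.f u • d.t v) (deriv d.t v) + wedge (d.x u v) (deriv (deriv d.t) v) := by
    have hev : (fun v' => deriv (fun v'' => d.G u v'') v') =ᶠ[nhds v]
        (fun v' => wedge (d.x u v') (deriv d.t v')) :=
      eventEq d.hJ hv fun y hy => (S3 y hy).deriv
    rw [hev.deriv_eq]
    have hL : HasDerivAt d.l (d.t v) v := hasDerivAt_of_contDiffOn d.hJ d.hl hv
    have hT : HasDerivAt (deriv d.t) (deriv (deriv d.t) v) v :=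
      hasDerivAt_of_contDiffOn d.hJ cl2 hv
    refine HasDerivAt.deriv (hasDerivAt_matrix fun i j => ?_)
    have h := ((((hL.eval i).const_mul (deriv d.f u)).add
          (hasDerivAt_const v (deriv d.g u * e4 i))).mul (hT.eval j)).sub
        ((((hL.eval j).const_mul (deriv d.f u)).add
          (hasDerivAt_const v (deriv d.g u * e4 j))).mul (hT.eval i))
    refine h.congr_d ?_
    simp only [wedge, EllipticData.x, Pi.add_apply, Pi.smul_apply, smul_eq_mul]
    ring
  have S5 : deriv (fun u' => d.G u' v) u =
      wedge (deriv (deriv d.f) u • d.l v + deriv (deriv d.g) u • e4) (d.t v) :=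
    (S1 u hu).deriv
  simp only [EllipticData.lapG, S2, S4, S5]

/-! ### Frame identities -/

lemma t_plane (d : EllipticData) : ∀ v ∈ d.J, d.t v 3 = 0 := by
  intro v hv
  have hL : HasDerivAt d.l (d.t v) v := hasDerivAt_of_contDiffOn d.hJ d.hl hv
  have h3 := (hL.eval 3).deriv
  rw [← h3, (eventEq d.hJ hv (fun y hy => d.hlplane y hy) :
    (fun y => d.l y 3) =ᶠ[nhds v] fun _ => 0).deriv_eq, deriv_const]

lemma t1_plane (d : EllipticData) : ∀ v ∈ d.J, deriv d.t v 3 = 0 := by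
  intro v hv
  have cl1 : ContDiffOn ℝ (⊤ : ℕ∞) d.t d.J := contDiffOn_deriv' d.hJ d.hl
  have hT : HasDerivAt d.t (deriv d.t v) v := hasDerivAt_of_contDiffOn d.hJ cl1 hv
  have h3 := (hT.eval 3).deriv
  rw [← h3, (eventEq d.hJ hv (fun y hy => t_plane d y hy) :
    (fun y => d.t y 3) =ᶠ[nhds v] fun _ => 0).deriv_eq, deriv_const]

lemma mink_t_l (d : EllipticData) : ∀ v ∈ d.J, mink (d.t v) (d.l v) = 0 := by
  intro v hv
  have hL : HasDerivAt d.l (d.t v) v := hasDerivAt_of_contDiffOn d.hJ d.hl hv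
  have h := (hL.mink' hL).deriv
  rw [(eventEq d.hJ hv (fun y hy => d.hll y hy) :
    (fun y => mink (d.l y) (d.l y)) =ᶠ[nhds v] fun _ => 1).deriv_eq, deriv_const] at h
  have := mink_comm (d.l v) (d.t v)
  linarith [h, this]

lemma mink_t1_l (d : EllipticData) : ∀ v ∈ d.J, mink (deriv d.t v) (d.l v) = -1 := by
  intro v hv
  have cl1 : ContDiffOn ℝ (⊤ : ℕ∞) d.t d.J := contDiffOn_deriv' d.hJ d.hl
  have hL : HasDerivAt d.l (d.t v) v := hasDerivAt_of_contDiffOn d.hJ d.hl hv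
  have hT : HasDerivAt d.t (deriv d.t v) v := hasDerivAt_of_contDiffOn d.hJ cl1 hv
  have h := (hT.mink' hL).deriv
  rw [(eventEq d.hJ hv (fun y hy => mink_t_l d y hy) :
    (fun y => mink (d.t y) (d.l y)) =ᶠ[nhds v] fun _ => 0).deriv_eq, deriv_const] at h
  have h2 := d.htt v hv
  have : mink (d.t v) (d.t v) = 1 := h2
  linarith [h, this]

lemma mink_t1_t (d : EllipticData) : ∀ v ∈ d.J, mink (deriv d.t v) (d.t v) = 0 := by
  intro v hv
  have cl1 : ContDiffOn ℝ (⊤ : ℕ∞) d.t d.J := contDiffOn_deriv' d.hJ d.hl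
  have hT : HasDerivAt d.t (deriv d.t v) v := hasDerivAt_of_contDiffOn d.hJ cl1 hv
  have h := (hT.mink' hT).deriv
  rw [(eventEq d.hJ hv (fun y hy => d.htt y hy) :
    (fun y => mink (d.t y) (d.t y)) =ᶠ[nhds v] fun _ => 1).deriv_eq, deriv_const] at h
  have := mink_comm (d.t v) (deriv d.t v)
  linarith [h, this]

lemma t1_expand (d : EllipticData) : ∀ v ∈ d.J, deriv d.t v = d.kappa v • d.n v - d.l v := by
  intro v hv
  have h := frame_expand (d.l v) (d.t v) (d.n v) (deriv d.t v)
    (d.hlplane v hv) (t_plane d v hv) (d.hnplane v hv) (t1_plane d v hv)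
    (d.hll v hv) (d.htt v hv) (d.hnn v hv)
    ((mink_comm _ _).trans (mink_t_l d v hv)) (d.hln v hv) (d.htn v hv)
  rw [mink_t1_l d v hv, mink_t1_t d v hv] at h
  rw [h]
  have : mink (deriv d.t v) (d.n v) = d.kappa v := rfl
  rw [this]
  funext i
  simp [Pi.add_apply, Pi.sub_apply, Pi.smul_apply, smul_eq_mul]
  ring

lemma t2_eq (d : EllipticData) (hκ : ∀ v ∈ d.J, d.kappa v = 0) :
    ∀ v ∈ d.J, deriv (deriv d.t) v = -(d.t v) := by
  intro v hv
  have hL : HasDerivAt d.l (d.t v) v := hasDerivAt_of_contDiffOn d.hJ d.hl hv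
  have hev : deriv d.t =ᶠ[nhds v] (fun y => -(d.l y)) := by
    refine eventEq d.hJ hv fun y hy => ?_
    rw [t1_expand d y hy, hκ y hy]
    funext i; simp
  rw [hev.deriv_eq]
  exact hL.neg.deriv

lemma unit_deriv1 (d : EllipticData) : ∀ u ∈ d.I,
    deriv d.f u * deriv (deriv d.f) u = deriv d.g u * deriv (deriv d.g) u := by
  intro u hu
  have cf1 : ContDiffOn ℝ (⊤ : ℕ∞) (deriv d.f) d.I := contDiffOn_deriv' d.hI d.hf
  have cg1 : ContDiffOn ℝ (⊤ : ℕ∞) (deriv d.g) d.I := contDiffOn_deriv' d.hI d.hg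
  have hF : HasDerivAt (deriv d.f) (deriv (deriv d.f) u) u :=
    hasDerivAt_of_contDiffOn d.hI cf1 hu
  have hG : HasDerivAt (deriv d.g) (deriv (deriv d.g) u) u :=
    hasDerivAt_of_contDiffOn d.hI cg1 hu
  have h := ((hF.mul hF).sub (hG.mul hG)).deriv
  change deriv (fun y => deriv d.f y * deriv d.f y - deriv d.g y * deriv d.g y) u = _ at h
  rw [(eventEq d.hI hu (fun y hy => by
      have := d.hunit y hy; nlinarith [this]) :
    (fun y => deriv d.f y * deriv d.f y - deriv d.g y * deriv d.g y) =ᶠ[nhds u]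
      fun _ => 1).deriv_eq, deriv_const] at h
  linarith [h]

lemma unit_deriv2 (d : EllipticData) : ∀ u ∈ d.I,
    deriv (deriv d.f) u ^ 2 + deriv d.f u * deriv (deriv (deriv d.f)) u =
    deriv (deriv d.g) u ^ 2 + deriv d.g u * deriv (deriv (deriv d.g)) u := by
  intro u hu
  have cf1 : ContDiffOn ℝ (⊤ : ℕ∞) (deriv d.f) d.I := contDiffOn_deriv' d.hI d.hf
  have cg1 : ContDiffOn ℝ (⊤ : ℕ∞) (deriv d.g) d.I := contDiffOn_deriv' d.hI d.hg
  have cf2 : ContDiffOn ℝ (⊤ : ℕ∞) (deriv (deriv d.f)) d.I := contDiffOn_deriv' d.hI cf1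
  have cg2 : ContDiffOn ℝ (⊤ : ℕ∞) (deriv (deriv d.g)) d.I := contDiffOn_deriv' d.hI cg1
  have hF : HasDerivAt (deriv d.f) (deriv (deriv d.f) u) u :=
    hasDerivAt_of_contDiffOn d.hI cf1 hu
  have hG : HasDerivAt (deriv d.g) (deriv (deriv d.g) u) u :=
    hasDerivAt_of_contDiffOn d.hI cg1 hu
  have hF2 : HasDerivAt (deriv (deriv d.f)) (deriv (deriv (deriv d.f)) u) u :=
    hasDerivAt_of_contDiffOn d.hI cf2 hu
  have hG2 : HasDerivAt (deriv (deriv d.g)) (deriv (deriv (deriv d.g)) u) u :=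
    hasDerivAt_of_contDiffOn d.hI cg2 hu
  have h := ((hF.mul hF2).sub (hG.mul hG2)).deriv
  change deriv (fun y => deriv d.f y * deriv (deriv d.f) y - deriv d.g y * deriv (deriv d.g) y) u = _ at h
  rw [(eventEq d.hI hu (fun y hy => by
      have := unit_deriv1 d y hy; linarith) :
    (fun y => deriv d.f y * deriv (deriv d.f) y - deriv d.g y * deriv (deriv d.g) y)
      =ᶠ[nhds u] fun _ => 0).deriv_eq, deriv_const] at h
  nlinarith [h]

/-! ### phi computations -/

lemma phi_zero (a b : Fin 4 → ℝ) : phi 0 a b = 0 := by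
  simp [phi]

lemma phi_lap (W1 W2 W3 W4 : Fin 4 → Fin 4 → ℝ) (c c' : ℝ) (a b : Fin 4 → ℝ) :
    phi (-(W1 + c • (W2 + W3) + c' • W4)) a b =
      -(phi W1 a b + c * (phi W2 a b + phi W3 a b) + c' * phi W4 a b) := by
  simp only [phi, Fin.sum_univ_four, Pi.neg_apply, Pi.add_apply, Pi.smul_apply, smul_eq_mul]
  ring

lemma phi_lap2 (W1 W2 : Fin 4 → Fin 4 → ℝ) (c c' : ℝ) (a b : Fin 4 → ℝ) :
    phi (-(c • W1 + c' • W2)) a b = -(c * phi W1 a b + c' * phi W2 a b) := by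
  simp only [phi, Fin.sum_univ_four, Pi.neg_apply, Pi.add_apply, Pi.smul_apply, smul_eq_mul]
  ring

/-- Simplified Laplacian when the spherical curvature vanishes. -/
lemma lapG_simp (d : EllipticData) (hκ : ∀ v ∈ d.J, d.kappa v = 0)
    {u v : ℝ} (hu : u ∈ d.I) (hv : v ∈ d.J) :
    d.lapG u v =
      -((deriv (deriv (deriv d.f)) u + deriv d.f u / d.f u * deriv (deriv d.f) u) •
          wedge (d.l v) (d.t v)
        + (deriv (deriv (deriv d.g)) u + deriv d.f u / d.f u * deriv (deriv d.g) u
            - deriv d.g u / (d.f u) ^ 2) • wedge e4 (d.t v)) := by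
  rw [lapG_formula d hu hv]
  have h1 : deriv d.t v = -(d.l v) := by
    rw [t1_expand d v hv, hκ v hv]; funext i; simp
  have h2 : deriv (deriv d.t) v = -(d.t v) := t2_eq d hκ v hv
  rw [h1, h2]
  funext i j
  simp only [wedge, EllipticData.x, Pi.neg_apply, Pi.add_apply, Pi.smul_apply, smul_eq_mul,
    Pi.sub_apply]
  have hf0 : d.f u ≠ 0 := ne_of_gt (d.hfpos u hu)
  field_simp
  ring

/-- Forward direction: harmonic Gauss map forces `κ ≡ 0`, `g′ ≡ 0`, `g″ ≡ 0`. -/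
lemma forward_dir (d : EllipticData) (h : ∀ u ∈ d.I, ∀ v ∈ d.J, d.lapG u v = 0) :
    (∀ v ∈ d.J, d.kappa v = 0) ∧
      (∀ u ∈ d.I, deriv d.g u = 0 ∧ deriv (deriv d.g) u = 0) := by
  obtain ⟨u0, hu0⟩ := d.hIne
  obtain ⟨v0, hv0⟩ := d.hJne
  -- Step 1: κ ≡ 0 on J
  have hκ : ∀ v ∈ d.J, d.kappa v = 0 := by
    intro v hv
    have h0 := congrArg (fun M => phi M (d.t v) (d.n v)) (h u0 hu0 v hv)
    rw [lapG_formula d hu0 hv, phi_zero] at h0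
    rw [phi_lap] at h0
    simp only [phi_wedge, EllipticData.x, mink_comb, mink_smul] at h0
    have m1 : mink (d.t v) (d.l v) = 0 := mink_t_l d v hv
    have m2 : mink (d.t v) e4 = 0 := by rw [mink_e4_right, t_plane d v hv]; norm_num
    have m3 : mink (d.n v) (d.l v) = 0 := (mink_comm _ _).trans (d.hln v hv)
    have m4 : mink (d.n v) e4 = 0 := by rw [mink_e4_right, d.hnplane v hv]; norm_num
    have m5 : mink (d.t v) (d.t v) = 1 := d.htt v hv
    have m6 : mink (d.n v) (d.t v) = 0 := (mink_comm _ _).trans (d.htn v hv)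
    have m7 : mink (d.n v) (deriv d.t v) = d.kappa v := by rw [mink_comm]; rfl
    have m8 : mink (d.t v) (deriv d.t v) = 0 := (mink_comm _ _).trans (mink_t1_t d v hv)
    rw [m1, m2, m3, m4, m5, m6, m7, m8] at h0
    have hf0 : (0:ℝ) < d.f u0 := d.hfpos u0 hu0
    have hF1 : deriv d.f u0 ^ 2 - deriv d.g u0 ^ 2 = 1 := d.hunit u0 hu0
    have hF1ne : deriv d.f u0 ≠ 0 := by nlinarith [sq_nonneg (deriv d.g u0), sq_nonneg (deriv d.f u0)]
    have hfne : d.f u0 ≠ 0 := ne_of_gt hf0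
    have hz : deriv d.f u0 * d.kappa v / (d.f u0)^2 = 0 := by linear_combination -h0
    rw [div_eq_zero_iff] at hz
    rcases hz with hz | hz
    · exact (mul_eq_zero.mp hz).resolve_left hF1ne
    · exact absurd hz (pow_ne_zero 2 hfne)
  refine ⟨hκ, ?_⟩
  -- Step 2 : the two ODE coefficients vanish on I
  have hAB : ∀ u ∈ d.I,
      (deriv (deriv (deriv d.f)) u + deriv d.f u / d.f u * deriv (deriv d.f) u = 0) ∧
      (deriv (deriv (deriv d.g)) u + deriv d.f u / d.f u * deriv (deriv d.g) u
          - deriv d.g u / (d.f u) ^ 2 = 0) := by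
    intro u hu
    have h0 := h u hu v0 hv0
    rw [lapG_simp d hκ hu hv0] at h0
    have m1 : mink (d.l v0) (d.l v0) = 1 := d.hll v0 hv0
    have m2' : mink (d.l v0) (d.t v0) = 0 := (mink_comm _ _).trans (mink_t_l d v0 hv0)
    have m3 : mink (d.t v0) (d.t v0) = 1 := d.htt v0 hv0
    have m4 : mink (d.l v0) e4 = 0 := by rw [mink_e4_right, d.hlplane v0 hv0]; norm_num
    have m5 : mink (d.t v0) e4 = 0 := by rw [mink_e4_right, t_plane d v0 hv0]; norm_num
    have m6 : mink e4 e4 = -1 := by simp [mink, e4]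
    have m7 : mink e4 (d.l v0) = 0 := (mink_comm _ _).trans m4
    have m8 : mink e4 (d.t v0) = 0 := (mink_comm _ _).trans m5
    have m9 : mink (d.t v0) (d.l v0) = 0 := mink_t_l d v0 hv0
    constructor
    · have hA := congrArg (fun M => phi M (d.l v0) (d.t v0)) h0
      rw [phi_lap2, phi_zero] at hA
      simp only [phi_wedge] at hA
      rw [m1, m2', m3, m4, m5, m9] at hA
      linear_combination -hA
    · have hB := congrArg (fun M => phi M e4 (d.t v0)) h0
      rw [phi_lap2, phi_zero] at hB
      simp only [phi_wedge] at hB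
      rw [m3, m5, m6, m7, m8] at hB
      linear_combination hB
  -- Step 3 : algebra
  intro u hu
  obtain ⟨hA, hB⟩ := hAB u hu
  have e1 : deriv d.f u ^ 2 - deriv d.g u ^ 2 = 1 := d.hunit u hu
  have e2 : deriv d.f u * deriv (deriv d.f) u = deriv d.g u * deriv (deriv d.g) u :=
    unit_deriv1 d u hu
  have e3 := unit_deriv2 d u hu
  have hf0 : (0:ℝ) < d.f u := d.hfpos u hu
  set a := deriv d.f u; set b := deriv (deriv d.f) u; set c := deriv (deriv (deriv d.f)) u
  set p := deriv d.g u; set q := deriv (deriv d.g) u; set r := deriv (deriv (deriv d.g)) u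
  set F := d.f u
  have hFne : F ≠ 0 := ne_of_gt hf0
  have hA' : c * F + a * b = 0 := by
    have := hA; field_simp at this; linear_combination this
  have hB' : r * F ^ 2 + a * q * F - p = 0 := by
    have hFB : F * (r * F ^ 2 + a * q * F - p) = 0 := by
      have := hB; field_simp at this; linear_combination F * this
    exact (mul_eq_zero.mp hFB).resolve_left hFne
  have hkey : q ^ 2 * F ^ 2 + a ^ 2 * p ^ 2 = 0 := by
    linear_combination (-(a^2)*F^2) * e3 + (a^3*F) * hA' + (-(a^2)*p) * hB'
      + ((-(a^3)*F) + (a*b + p*q)*F^2) * e2 + (-(q^2)*F^2) * e1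
  have h1 : q ^ 2 * F ^ 2 = 0 := by nlinarith [hkey, sq_nonneg (a*p), sq_nonneg (q*F)]
  have h2 : a ^ 2 * p ^ 2 = 0 := by linarith
  have hq : q = 0 := by
    rcases mul_eq_zero.mp h1 with hz | hz
    · exact pow_eq_zero_iff (by norm_num) |>.mp hz
    · exact absurd hz (pow_ne_zero 2 hFne)
  have hane : a ≠ 0 := by nlinarith [sq_nonneg p, sq_nonneg a]
  have hp : p = 0 := by
    rcases mul_eq_zero.mp h2 with hz | hz
    · exact absurd (pow_eq_zero_iff (by norm_num) |>.mp hz) hane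
    · exact pow_eq_zero_iff (by norm_num) |>.mp hz
  exact ⟨hp, hq⟩

/-- Converse direction. -/
lemma converse_dir (d : EllipticData) (hκ : ∀ v ∈ d.J, d.kappa v = 0)
    (hg1 : ∀ u ∈ d.I, deriv d.g u = 0) :
    ∀ u ∈ d.I, ∀ v ∈ d.J, d.lapG u v = 0 := by
  have hg2 : ∀ u ∈ d.I, deriv (deriv d.g) u = 0 := by
    intro u hu
    rw [(eventEq d.hI hu hg1 : deriv d.g =ᶠ[nhds u] fun _ => 0).deriv_eq, deriv_const]
  have hg3 : ∀ u ∈ d.I, deriv (deriv (deriv d.g)) u = 0 := by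
    intro u hu
    rw [(eventEq d.hI hu hg2 : deriv (deriv d.g) =ᶠ[nhds u] fun _ => 0).deriv_eq, deriv_const]
  have hf2 : ∀ u ∈ d.I, deriv (deriv d.f) u = 0 := by
    intro u hu
    have e2 := unit_deriv1 d u hu
    have e1 := d.hunit u hu
    rw [hg1 u hu, hg2 u hu] at e2
    have hane : deriv d.f u ≠ 0 := by
      rw [hg1 u hu] at e1; intro hz; rw [hz] at e1; norm_num at e1
    have := mul_eq_zero.mp (by linarith [e2] : deriv d.f u * deriv (deriv d.f) u = 0)
    exact this.resolve_left hane
  have hf3 : ∀ u ∈ d.I, deriv (deriv (deriv d.f)) u = 0 := by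
    intro u hu
    rw [(eventEq d.hI hu hf2 : deriv (deriv d.f) =ᶠ[nhds u] fun _ => 0).deriv_eq, deriv_const]
  intro u hu v hv
  rw [lapG_simp d hκ hu hv, hf2 u hu, hf3 u hu, hg1 u hu, hg2 u hu, hg3 u hu]
  funext i j
  simp

/-- **Meridian surfaces of elliptic type with harmonic Gauss map** (Theorem 4.1). -/
theorem harmonic_gauss_map_elliptic (d : EllipticData) :
    ((∀ u ∈ d.I, ∀ v ∈ d.J, d.lapG u v = 0) ↔
      ((∀ v ∈ d.J, d.kappa v = 0) ∧ (∀ u ∈ d.I, deriv d.g u = 0))) ∧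
    ((∀ u ∈ d.I, ∀ v ∈ d.J, d.lapG u v = 0) → ∀ u ∈ d.I, d.kappaM u = 0) := by
  constructor
  · constructor
    · intro h
      obtain ⟨hκ, hg⟩ := forward_dir d h
      exact ⟨hκ, fun u hu => (hg u hu).1⟩
    · rintro ⟨hκ, hg1⟩
      exact converse_dir d hκ hg1
  · intro h u hu
    obtain ⟨hκ, hg⟩ := forward_dir d h
    obtain ⟨hp, hq⟩ := hg u hu
    simp [EllipticData.kappaM, hp, hq]
end
end

section
/- Meridian surfaces of elliptic type with pointwise 1-type Gauss map of first kind (Theorem 5.1): assume g′ either vanishes identically on I or vanishes nowhere on I. Then there exists a smooth function λ : I × J → ℝ vanishing nowhere such that ΔG(u,v) = λ(u,v)·G(u,v) for all (u,v) ∈ I × J, if and only if κ ≡ 0 on J, g′ vanishes nowhere on I, and f satisfies the differential equation f·( f·f″/√(f′² − 1) )′ − f′·√(f′² − 1) = 0 on I. -/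
noncomputable section

namespace MerAux
open Filter

open Matrix

def dot4 (a b : Fin 4 → ℝ) : ℝ := a 0 * b 0 + a 1 * b 1 + a 2 * b 2 + a 3 * b 3

lemma dot4_comm (a b : Fin 4 → ℝ) : dot4 a b = dot4 b a := by simp [dot4]; ring

lemma mink_eq_dot4 {a : Fin 4 → ℝ} (b : Fin 4 → ℝ) (ha : a 3 = 0) : mink a b = dot4 a b := by
  simp [mink, dot4, ha]

def frob (A B : Fin 4 → Fin 4 → ℝ) : ℝ := ∑ i : Fin 4, ∑ j : Fin 4, A i j * B i j

lemma frob_add_left (A B C : Fin 4 → Fin 4 → ℝ) : frob (A + B) C = frob A C + frob B C := by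
  simp [frob, add_mul, Finset.sum_add_distrib]

lemma frob_smul_left (r : ℝ) (A C : Fin 4 → Fin 4 → ℝ) : frob (r • A) C = r * frob A C := by
  simp [frob, Finset.mul_sum, mul_assoc]

lemma frob_wedge (a b c e : Fin 4 → ℝ) :
    frob (wedge a b) (wedge c e) = 2 * (dot4 a c * dot4 b e - dot4 a e * dot4 b c) := by
  simp [frob, wedge, dot4, Fin.sum_univ_four]; ring

/-- Expansion of a vector of the hyperplane in an orthonormal frame of the hyperplane. -/
lemma expand3 (a b c w : Fin 4 → ℝ)
    (ha3 : a 3 = 0) (hb3 : b 3 = 0) (hc3 : c 3 = 0) (hw3 : w 3 = 0)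
    (haa : dot4 a a = 1) (hbb : dot4 b b = 1) (hcc : dot4 c c = 1)
    (hab : dot4 a b = 0) (hac : dot4 a c = 0) (hbc : dot4 b c = 0) :
    w = dot4 w a • a + dot4 w b • b + dot4 w c • c := by
  set u : Fin 4 → ℝ := w - (dot4 w a • a + dot4 w b • b + dot4 w c • c) with hu
  have haa3 : a 0 * a 0 + a 1 * a 1 + a 2 * a 2 = 1 := by
    simp only [dot4] at haa; linear_combination haa - a 3 * ha3
  have hbb3 : b 0 * b 0 + b 1 * b 1 + b 2 * b 2 = 1 := by
    simp only [dot4] at hbb; linear_combination hbb - b 3 * hb3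
  have hcc3 : c 0 * c 0 + c 1 * c 1 + c 2 * c 2 = 1 := by
    simp only [dot4] at hcc; linear_combination hcc - c 3 * hc3
  have hab3 : a 0 * b 0 + a 1 * b 1 + a 2 * b 2 = 0 := by
    simp only [dot4] at hab; linear_combination hab - a 3 * hb3
  have hac3 : a 0 * c 0 + a 1 * c 1 + a 2 * c 2 = 0 := by
    simp only [dot4] at hac; linear_combination hac - a 3 * hc3
  have hbc3 : b 0 * c 0 + b 1 * c 1 + b 2 * c 2 = 0 := by
    simp only [dot4] at hbc; linear_combination hbc - b 3 * hc3
  have hui : ∀ i : Fin 4, u i = w i - (dot4 w a * a i + dot4 w b * b i + dot4 w c * c i) := by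
    intro i; simp [hu]
  have hua : u 0 * a 0 + u 1 * a 1 + u 2 * a 2 = 0 := by
    simp only [hui, dot4]
    linear_combination (-(w 0 * a 0 + w 1 * a 1 + w 2 * a 2 + w 3 * a 3)) * haa3
      - (w 0 * b 0 + w 1 * b 1 + w 2 * b 2 + w 3 * b 3) * hab3
      - (w 0 * c 0 + w 1 * c 1 + w 2 * c 2 + w 3 * c 3) * hac3 - w 3 * ha3
  have hub : u 0 * b 0 + u 1 * b 1 + u 2 * b 2 = 0 := by
    simp only [hui, dot4]
    linear_combination (-(w 0 * a 0 + w 1 * a 1 + w 2 * a 2 + w 3 * a 3)) * hab3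
      - (w 0 * b 0 + w 1 * b 1 + w 2 * b 2 + w 3 * b 3) * hbb3
      - (w 0 * c 0 + w 1 * c 1 + w 2 * c 2 + w 3 * c 3) * hbc3 - w 3 * hb3
  have huc : u 0 * c 0 + u 1 * c 1 + u 2 * c 2 = 0 := by
    simp only [hui, dot4]
    linear_combination (-(w 0 * a 0 + w 1 * a 1 + w 2 * a 2 + w 3 * a 3)) * hac3
      - (w 0 * b 0 + w 1 * b 1 + w 2 * b 2 + w 3 * b 3) * hbc3
      - (w 0 * c 0 + w 1 * c 1 + w 2 * c 2 + w 3 * c 3) * hcc3 - w 3 * hc3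
  set M : Matrix (Fin 3) (Fin 3) ℝ := !![a 0, a 1, a 2; b 0, b 1, b 2; c 0, c 1, c 2] with hM
  have hMMT : M * Mᵀ = 1 := by
    ext i j
    fin_cases i <;> fin_cases j <;>
      simp [hM, Matrix.mul_apply, Fin.sum_univ_three, Matrix.one_apply, Matrix.transpose_apply, Matrix.vecHead, Matrix.vecTail] <;>
      first
        | linear_combination haa3
        | linear_combination hbb3
        | linear_combination hcc3
        | linear_combination hab3
        | linear_combination hac3
        | linear_combination hbc3
  have hMTM : Mᵀ * M = 1 := mul_eq_one_comm.mp hMMT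
  have hMu : M.mulVec ![u 0, u 1, u 2] = 0 := by
    funext i
    fin_cases i <;>
      simp [hM, Matrix.mulVec, dotProduct, Fin.sum_univ_three] <;>
      first
        | linear_combination hua
        | linear_combination hub
        | linear_combination huc
  have huv0 : ![u 0, u 1, u 2] = (0 : Fin 3 → ℝ) := by
    calc ![u 0, u 1, u 2] = (Mᵀ * M).mulVec ![u 0, u 1, u 2] := by
          rw [hMTM, Matrix.one_mulVec]
    _ = Mᵀ.mulVec (M.mulVec ![u 0, u 1, u 2]) := (Matrix.mulVec_mulVec _ _ _).symm
    _ = 0 := by rw [hMu, Matrix.mulVec_zero]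
  have h0 : u 0 = 0 := congrFun huv0 0
  have h1 : u 1 = 0 := congrFun huv0 1
  have h2 : u 2 = 0 := congrFun huv0 2
  have h3 : u 3 = 0 := by
    rw [hui 3, ha3, hb3, hc3, hw3]; ring
  funext i
  have hkey : ∀ i, u i = 0 := by
    intro i; fin_cases i
    · exact h0
    · exact h1
    · exact h2
    · exact h3
  have := hkey i
  simp only [hu, Pi.sub_apply, Pi.add_apply, Pi.smul_apply, smul_eq_mul] at this
  simp only [Pi.add_apply, Pi.smul_apply, smul_eq_mul]
  linarith



lemma hasDerivAt_comp_pi {A : ℝ → Fin 4 → ℝ} {A' : Fin 4 → ℝ} {x : ℝ}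
    (hA : HasDerivAt A A' x) (i : Fin 4) :
    HasDerivAt (fun w => A w i) (A' i) x := hasDerivAt_pi.mp hA i

lemma hasDerivAt_mink {A B : ℝ → Fin 4 → ℝ} {A' B' : Fin 4 → ℝ} {x : ℝ}
    (hA : HasDerivAt A A' x) (hB : HasDerivAt B B' x) :
    HasDerivAt (fun w => mink (A w) (B w)) (mink A' (B x) + mink (A x) B') x := by
  have hAi := fun i => hasDerivAt_comp_pi hA i
  have hBi := fun i => hasDerivAt_comp_pi hB i
  have h := ((((hAi 0).mul (hBi 0)).add ((hAi 1).mul (hBi 1))).add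
    ((hAi 2).mul (hBi 2))).sub ((hAi 3).mul (hBi 3))
  replace h : HasDerivAt (fun w => mink (A w) (B w)) _ x := h
  convert h using 1
  simp [mink]; ring

lemma hasDerivAt_wedge {A B : ℝ → Fin 4 → ℝ} {A' B' : Fin 4 → ℝ} {x : ℝ}
    (hA : HasDerivAt A A' x) (hB : HasDerivAt B B' x) :
    HasDerivAt (fun w => wedge (A w) (B w)) (wedge A' (B x) + wedge (A x) B') x := by
  rw [hasDerivAt_pi]; intro i; rw [hasDerivAt_pi]; intro j
  have hAi := fun i => hasDerivAt_comp_pi hA i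
  have hBi := fun i => hasDerivAt_comp_pi hB i
  have h := ((hAi i).mul (hBi j)).sub ((hAi j).mul (hBi i))
  replace h : HasDerivAt (fun w => wedge (A w) (B w) i j) _ x := h
  refine h.congr_deriv ?_
  · simp [wedge]; ring

/-- If `F` is constant on an open set, any derivative at a point of the set is `0`. -/
lemma eq_zero_of_const_on {E : Type*} [NormedAddCommGroup E] [NormedSpace ℝ E]
    {F : ℝ → E} {s : Set ℝ} {c : E} {x : ℝ} {F' : E} (hs : IsOpen s) (hx : x ∈ s)
    (h : ∀ y ∈ s, F y = c) (hF : HasDerivAt F F' x) : F' = 0 := by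
  have hev : F =ᶠ[nhds x] (fun _ => c) := by
    filter_upwards [hs.mem_nhds hx] with y hy using h y hy
  have h2 : HasDerivAt F (0 : E) x := by
    exact (hasDerivAt_const x c).congr_of_eventuallyEq hev
  exact hF.unique h2

/-- deriv of a function that coincides with `Φ` on an open set. -/
lemma deriv_congr_on {E : Type*} [NormedAddCommGroup E] [NormedSpace ℝ E]
    {F Φ : ℝ → E} {s : Set ℝ} {x : ℝ} (hs : IsOpen s) (hx : x ∈ s)
    (h : ∀ y ∈ s, F y = Φ y) : deriv F x = deriv Φ x := by
  apply Filter.EventuallyEq.deriv_eq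
  filter_upwards [hs.mem_nhds hx] with y hy using h y hy

lemma contDiffOn_comp_pi {A : ℝ → Fin 4 → ℝ} {s : Set ℝ}
    (hA : ContDiffOn ℝ (⊤ : ℕ∞) A s) (i : Fin 4) : ContDiffOn ℝ (⊤ : ℕ∞) (fun w => A w i) s := by
  exact (ContinuousLinearMap.proj i : (Fin 4 → ℝ) →L[ℝ] ℝ).contDiff.comp_contDiffOn hA

lemma hasDerivAt_of_contDiffOn {E : Type*} [NormedAddCommGroup E] [NormedSpace ℝ E]
    {F : ℝ → E} {s : Set ℝ} (hs : IsOpen s) (hF : ContDiffOn ℝ (⊤ : ℕ∞) F s) {x : ℝ} (hx : x ∈ s) :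
    HasDerivAt F (deriv F x) x := by
  have := (hF.differentiableOn (by norm_num)).differentiableAt (hs.mem_nhds hx)
  exact this.hasDerivAt

lemma deriv_contDiffOn {E : Type*} [NormedAddCommGroup E] [NormedSpace ℝ E]
    {F : ℝ → E} {s : Set ℝ} (hs : IsOpen s) (hF : ContDiffOn ℝ (⊤ : ℕ∞) F s) :
    ContDiffOn ℝ (⊤ : ℕ∞) (deriv F) s := by
  exact hF.deriv_of_isOpen hs (by simp)

/-- Extraction of coefficients in the orthonormal wedge basis. -/
lemma coeff_ext (lv tv nv : Fin 4 → ℝ)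
    (hll : dot4 lv lv = 1) (htt : dot4 tv tv = 1) (hnn : dot4 nv nv = 1)
    (hlt : dot4 lv tv = 0) (hln : dot4 lv nv = 0) (htn : dot4 tv nv = 0)
    (hle : dot4 lv e4 = 0) (hte : dot4 tv e4 = 0) (hne : dot4 nv e4 = 0)
    {a1 a2 a3 a4 a5 b1 b2 : ℝ}
    (h : a1 • wedge lv tv + a2 • wedge e4 tv + a3 • wedge lv nv + a4 • wedge e4 nv
        + a5 • wedge tv nv = b1 • wedge lv tv + b2 • wedge e4 tv) :
    a1 = b1 ∧ a2 = b2 ∧ a3 = 0 ∧ a4 = 0 ∧ a5 = 0 := by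
  have hee : dot4 e4 e4 = 1 := by simp [dot4, e4]
  have htl := (dot4_comm tv lv).trans hlt
  have hnl := (dot4_comm nv lv).trans hln
  have hnt := (dot4_comm nv tv).trans htn
  have hel := (dot4_comm e4 lv).trans hle
  have het := (dot4_comm e4 tv).trans hte
  have hen := (dot4_comm e4 nv).trans hne
  have key : ∀ C : Fin 4 → Fin 4 → ℝ,
      frob (a1 • wedge lv tv + a2 • wedge e4 tv + a3 • wedge lv nv + a4 • wedge e4 nv
        + a5 • wedge tv nv) C = frob (b1 • wedge lv tv + b2 • wedge e4 tv) C :=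
    fun C => by rw [h]
  have E1 := key (wedge lv tv)
  have E2 := key (wedge e4 tv)
  have E3 := key (wedge lv nv)
  have E4 := key (wedge e4 nv)
  have E5 := key (wedge tv nv)
  simp only [frob_add_left, frob_smul_left, frob_wedge, hll, htt, hnn, hlt, hln, htn,
    hle, hte, hne, hee, htl, hnl, hnt, hel, het, hen] at E1 E2 E3 E4 E5
  refine ⟨by linarith, by linarith, by linarith, by linarith, by linarith⟩

lemma mink_comm (a b : Fin 4 → ℝ) : mink a b = mink b a := by simp [mink]; ring

lemma dot4_e4 (a : Fin 4 → ℝ) : dot4 a e4 = a 3 := by simp [dot4, e4]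

section Data
variable (d : EllipticData)

lemma hF1at : ∀ u ∈ d.I, HasDerivAt d.f (deriv d.f u) u :=
  fun u hu => hasDerivAt_of_contDiffOn d.hI d.hf hu

lemma hf1s : ContDiffOn ℝ (⊤ : ℕ∞) (deriv d.f) d.I := deriv_contDiffOn d.hI d.hf

lemma hF2at : ∀ u ∈ d.I, HasDerivAt (deriv d.f) (deriv (deriv d.f) u) u :=
  fun u hu => hasDerivAt_of_contDiffOn d.hI (hf1s d) hu

lemma hf2s : ContDiffOn ℝ (⊤ : ℕ∞) (deriv (deriv d.f)) d.I := deriv_contDiffOn d.hI (hf1s d)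

lemma hF3at : ∀ u ∈ d.I, HasDerivAt (deriv (deriv d.f)) (deriv (deriv (deriv d.f)) u) u :=
  fun u hu => hasDerivAt_of_contDiffOn d.hI (hf2s d) hu

lemma hG1at : ∀ u ∈ d.I, HasDerivAt d.g (deriv d.g u) u :=
  fun u hu => hasDerivAt_of_contDiffOn d.hI d.hg hu

lemma hg1s : ContDiffOn ℝ (⊤ : ℕ∞) (deriv d.g) d.I := deriv_contDiffOn d.hI d.hg

lemma hG2at : ∀ u ∈ d.I, HasDerivAt (deriv d.g) (deriv (deriv d.g) u) u :=
  fun u hu => hasDerivAt_of_contDiffOn d.hI (hg1s d) hu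

lemma hg2s : ContDiffOn ℝ (⊤ : ℕ∞) (deriv (deriv d.g)) d.I := deriv_contDiffOn d.hI (hg1s d)

lemma hG3at : ∀ u ∈ d.I, HasDerivAt (deriv (deriv d.g)) (deriv (deriv (deriv d.g)) u) u :=
  fun u hu => hasDerivAt_of_contDiffOn d.hI (hg2s d) hu

lemma hF1ne : ∀ u ∈ d.I, deriv d.f u ≠ 0 := by
  intro u hu
  have h := d.hunit u hu
  intro h0
  rw [h0] at h
  nlinarith [sq_nonneg (deriv d.g u)]

lemma hfne : ∀ u ∈ d.I, d.f u ≠ 0 := fun u hu => ne_of_gt (d.hfpos u hu)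

lemma hrel1 : ∀ u ∈ d.I,
    deriv d.f u * deriv (deriv d.f) u = deriv d.g u * deriv (deriv d.g) u := by
  intro u hu
  have hD : HasDerivAt (fun w => (deriv d.f w) ^ 2 - (deriv d.g w) ^ 2)
      (2 * deriv d.f u ^ 1 * deriv (deriv d.f) u - 2 * deriv d.g u ^ 1 * deriv (deriv d.g) u) u :=
    ((hF2at d u hu).pow 2).sub ((hG2at d u hu).pow 2)
  have h0 := eq_zero_of_const_on d.hI hu d.hunit hD
  simp at h0
  linarith

lemma hrel2 : ∀ u ∈ d.I,
    deriv (deriv d.f) u ^ 2 + deriv d.f u * deriv (deriv (deriv d.f)) u =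
      deriv (deriv d.g) u ^ 2 + deriv d.g u * deriv (deriv (deriv d.g)) u := by
  intro u hu
  have hD : HasDerivAt (fun w => deriv d.f w * deriv (deriv d.f) w - deriv d.g w * deriv (deriv d.g) w)
      ((deriv (deriv d.f) u * deriv (deriv d.f) u + deriv d.f u * deriv (deriv (deriv d.f)) u)
        - (deriv (deriv d.g) u * deriv (deriv d.g) u + deriv d.g u * deriv (deriv (deriv d.g)) u)) u :=
    ((hF2at d u hu).mul (hF3at d u hu)).sub ((hG2at d u hu).mul (hG3at d u hu))
  have h0 := eq_zero_of_const_on (c := 0) d.hI hu (fun y hy => by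
    have := hrel1 d y hy; linarith) hD
  nlinarith [h0]

lemma hTat : ∀ v ∈ d.J, HasDerivAt d.l (d.t v) v :=
  fun v hv => hasDerivAt_of_contDiffOn d.hJ d.hl hv

lemma hts : ContDiffOn ℝ (⊤ : ℕ∞) d.t d.J := deriv_contDiffOn d.hJ d.hl

lemma hT'at : ∀ v ∈ d.J, HasDerivAt d.t (deriv d.t v) v :=
  fun v hv => hasDerivAt_of_contDiffOn d.hJ (hts d) hv

lemma ht's : ContDiffOn ℝ (⊤ : ℕ∞) (deriv d.t) d.J := deriv_contDiffOn d.hJ (hts d)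

lemma hNat : ∀ v ∈ d.J, HasDerivAt d.n (deriv d.n v) v :=
  fun v hv => hasDerivAt_of_contDiffOn d.hJ d.hn hv

lemma hT3 : ∀ v ∈ d.J, d.t v 3 = 0 := fun v hv =>
  eq_zero_of_const_on d.hJ hv d.hlplane (hasDerivAt_comp_pi (hTat d v hv) 3)

lemma hT'3 : ∀ v ∈ d.J, deriv d.t v 3 = 0 := fun v hv =>
  eq_zero_of_const_on d.hJ hv (hT3 d) (hasDerivAt_comp_pi (hT'at d v hv) 3)

lemma hN'3 : ∀ v ∈ d.J, deriv d.n v 3 = 0 := fun v hv =>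
  eq_zero_of_const_on d.hJ hv d.hnplane (hasDerivAt_comp_pi (hNat d v hv) 3)

lemma htl0 : ∀ v ∈ d.J, mink (d.t v) (d.l v) = 0 := by
  intro v hv
  have hD := hasDerivAt_mink (hTat d v hv) (hTat d v hv)
  have h0 := eq_zero_of_const_on d.hJ hv d.hll hD
  rw [mink_comm (d.l v) (d.t v)] at h0
  linarith

lemma ht'l : ∀ v ∈ d.J, mink (deriv d.t v) (d.l v) = -1 := by
  intro v hv
  have hD := hasDerivAt_mink (hT'at d v hv) (hTat d v hv)
  have h0 := eq_zero_of_const_on d.hJ hv (htl0 d) hD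
  have h1 := d.htt v hv
  have h2 : mink (d.t v) (d.t v) = 1 := h1
  linarith

lemma ht't : ∀ v ∈ d.J, mink (deriv d.t v) (d.t v) = 0 := by
  intro v hv
  have hD := hasDerivAt_mink (hT'at d v hv) (hT'at d v hv)
  have h0 := eq_zero_of_const_on d.hJ hv d.htt hD
  rw [mink_comm (d.t v) (deriv d.t v)] at h0
  linarith

lemma htn' : ∀ v ∈ d.J, mink (d.t v) (deriv d.n v) = -(d.kappa v) := by
  intro v hv
  have hD := hasDerivAt_mink (hT'at d v hv) (hNat d v hv)
  have h0 := eq_zero_of_const_on d.hJ hv d.htn hD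
  have : d.kappa v = mink (deriv d.t v) (d.n v) := rfl
  linarith

lemma hln' : ∀ v ∈ d.J, mink (d.l v) (deriv d.n v) = 0 := by
  intro v hv
  have hD := hasDerivAt_mink (hTat d v hv) (hNat d v hv)
  have h0 := eq_zero_of_const_on d.hJ hv d.hln hD
  have h2 : mink (d.t v) (d.n v) = 0 := d.htn v hv
  linarith

lemma hn'n : ∀ v ∈ d.J, mink (deriv d.n v) (d.n v) = 0 := by
  intro v hv
  have hD := hasDerivAt_mink (hNat d v hv) (hNat d v hv)
  have h0 := eq_zero_of_const_on d.hJ hv d.hnn hD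
  rw [mink_comm (d.n v) (deriv d.n v)] at h0
  linarith

lemma dll : ∀ v ∈ d.J, dot4 (d.l v) (d.l v) = 1 := fun v hv => by
  rw [← mink_eq_dot4 _ (d.hlplane v hv)]; exact d.hll v hv

lemma dtt : ∀ v ∈ d.J, dot4 (d.t v) (d.t v) = 1 := fun v hv => by
  rw [← mink_eq_dot4 _ (hT3 d v hv)]; exact d.htt v hv

lemma dnn : ∀ v ∈ d.J, dot4 (d.n v) (d.n v) = 1 := fun v hv => by
  rw [← mink_eq_dot4 _ (d.hnplane v hv)]; exact d.hnn v hv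

lemma dlt : ∀ v ∈ d.J, dot4 (d.l v) (d.t v) = 0 := fun v hv => by
  rw [← mink_eq_dot4 _ (d.hlplane v hv), mink_comm]; exact htl0 d v hv

lemma dln : ∀ v ∈ d.J, dot4 (d.l v) (d.n v) = 0 := fun v hv => by
  rw [← mink_eq_dot4 _ (d.hlplane v hv)]; exact d.hln v hv

lemma dtn : ∀ v ∈ d.J, dot4 (d.t v) (d.n v) = 0 := fun v hv => by
  rw [← mink_eq_dot4 _ (hT3 d v hv)]; exact d.htn v hv

lemma dle : ∀ v ∈ d.J, dot4 (d.l v) e4 = 0 := fun v hv => by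
  rw [dot4_e4]; exact d.hlplane v hv

lemma dte : ∀ v ∈ d.J, dot4 (d.t v) e4 = 0 := fun v hv => by
  rw [dot4_e4]; exact hT3 d v hv

lemma dne : ∀ v ∈ d.J, dot4 (d.n v) e4 = 0 := fun v hv => by
  rw [dot4_e4]; exact d.hnplane v hv

/-- Frenet-type formula: `t′ = −l + κ·n`. -/
lemma hTP : ∀ v ∈ d.J, deriv d.t v = -(d.l v) + d.kappa v • d.n v := by
  intro v hv
  have h := expand3 (d.l v) (d.t v) (d.n v) (deriv d.t v)
    (d.hlplane v hv) (hT3 d v hv) (d.hnplane v hv) (hT'3 d v hv)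
    (dll d v hv) (dtt d v hv) (dnn d v hv) (dlt d v hv) (dln d v hv) (dtn d v hv)
  have c1 : dot4 (deriv d.t v) (d.l v) = -1 := by
    rw [← mink_eq_dot4 _ (hT'3 d v hv)]; exact ht'l d v hv
  have c2 : dot4 (deriv d.t v) (d.t v) = 0 := by
    rw [← mink_eq_dot4 _ (hT'3 d v hv)]; exact ht't d v hv
  have c3 : dot4 (deriv d.t v) (d.n v) = d.kappa v := by
    rw [← mink_eq_dot4 _ (hT'3 d v hv)]; rfl
  rw [c1, c2, c3] at h
  rw [h]
  funext i
  simp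

/-- Frenet-type formula: `n′ = −κ·t`. -/
lemma hNP : ∀ v ∈ d.J, deriv d.n v = -(d.kappa v) • d.t v := by
  intro v hv
  have h := expand3 (d.l v) (d.t v) (d.n v) (deriv d.n v)
    (d.hlplane v hv) (hT3 d v hv) (d.hnplane v hv) (hN'3 d v hv)
    (dll d v hv) (dtt d v hv) (dnn d v hv) (dlt d v hv) (dln d v hv) (dtn d v hv)
  have c1 : dot4 (deriv d.n v) (d.l v) = 0 := by
    rw [← mink_eq_dot4 _ (hN'3 d v hv), mink_comm]; exact hln' d v hv
  have c2 : dot4 (deriv d.n v) (d.t v) = -(d.kappa v) := by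
    rw [← mink_eq_dot4 _ (hN'3 d v hv), mink_comm]; exact htn' d v hv
  have c3 : dot4 (deriv d.n v) (d.n v) = 0 := by
    rw [← mink_eq_dot4 _ (hN'3 d v hv)]; exact hn'n d v hv
  rw [c1, c2, c3] at h
  rw [h]
  funext i
  simp

lemma hks : ContDiffOn ℝ (⊤ : ℕ∞) d.kappa d.J := by
  have : d.kappa = fun v => mink (deriv d.t v) (d.n v) := rfl
  rw [this]
  simp only [mink]
  have hT := fun i => contDiffOn_comp_pi (ht's d) i
  have hN := fun i => contDiffOn_comp_pi d.hn i
  exact (((((hT 0).mul (hN 0)).add ((hT 1).mul (hN 1))).add ((hT 2).mul (hN 2))).sub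
    ((hT 3).mul (hN 3)))

lemma hkat : ∀ v ∈ d.J, HasDerivAt d.kappa (deriv d.kappa v) v :=
  fun v hv => hasDerivAt_of_contDiffOn d.hJ (hks d) hv

lemma hGfun (v : ℝ) : ∀ u', d.G u' v =
    deriv d.f u' • wedge (d.l v) (d.t v) + deriv d.g u' • wedge e4 (d.t v) := by
  intro u'
  funext i j
  simp only [EllipticData.G, EllipticData.x, wedge, Pi.add_apply, Pi.smul_apply, smul_eq_mul]
  ring

lemma hGuat (v : ℝ) : ∀ u' ∈ d.I, HasDerivAt (fun w => d.G w v)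
    (deriv (deriv d.f) u' • wedge (d.l v) (d.t v) + deriv (deriv d.g) u' • wedge e4 (d.t v)) u' := by
  intro u' hu'
  have hfun : (fun w => d.G w v) =
      fun w => deriv d.f w • wedge (d.l v) (d.t v) + deriv d.g w • wedge e4 (d.t v) :=
    funext (hGfun d v)
  rw [hfun]
  exact ((hF2at d u' hu').smul_const _).add ((hG2at d u' hu').smul_const _)

lemma hGu_deriv (v : ℝ) : ∀ u' ∈ d.I, deriv (fun w => d.G w v) u' =
    deriv (deriv d.f) u' • wedge (d.l v) (d.t v) + deriv (deriv d.g) u' • wedge e4 (d.t v) :=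
  fun u' hu' => (hGuat d v u' hu').deriv

lemma hGuu (v : ℝ) : ∀ u ∈ d.I, deriv (fun w => deriv (fun w' => d.G w' v) w) u =
    deriv (deriv (deriv d.f)) u • wedge (d.l v) (d.t v)
      + deriv (deriv (deriv d.g)) u • wedge e4 (d.t v) := by
  intro u hu
  rw [deriv_congr_on d.hI hu (hGu_deriv d v)]
  exact (((hF3at d u hu).smul_const _).add ((hG3at d u hu).smul_const _)).deriv

lemma hxv (u : ℝ) : ∀ v' ∈ d.J, HasDerivAt (fun w => d.x u w) (deriv d.f u • d.t v') v' := by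
  intro v' hv'
  have hfun : (fun w => d.x u w) = fun w => deriv d.f u • d.l w + deriv d.g u • e4 := rfl
  rw [hfun]
  exact ((hTat d v' hv').const_smul (deriv d.f u)).add_const _

lemma hGvat (u : ℝ) : ∀ v' ∈ d.J, HasDerivAt (fun w => d.G u w)
    (d.kappa v' • wedge (d.x u v') (d.n v') - wedge (d.x u v') (d.l v')) v' := by
  intro v' hv'
  have h1 : HasDerivAt (fun w => wedge (d.x u w) (d.t w))
      (wedge (deriv d.f u • d.t v') (d.t v') + wedge (d.x u v') (deriv d.t v')) v' :=
    hasDerivAt_wedge (hxv d u v' hv') (hT'at d v' hv')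
  have hfun : (fun w => d.G u w) = fun w => wedge (d.x u w) (d.t w) := rfl
  rw [hfun]
  convert h1 using 1
  rw [hTP d v' hv']
  funext i j
  simp only [wedge, EllipticData.x, Pi.add_apply, Pi.sub_apply, Pi.smul_apply, Pi.neg_apply,
    smul_eq_mul]
  ring

lemma hGv_deriv (u : ℝ) : ∀ v' ∈ d.J, deriv (fun w => d.G u w) v' =
    d.kappa v' • wedge (d.x u v') (d.n v') - wedge (d.x u v') (d.l v') :=
  fun v' hv' => (hGvat d u v' hv').deriv

lemma hGvv (u : ℝ) : ∀ v ∈ d.J, deriv (fun w => deriv (fun w' => d.G u w') w) v =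
    (deriv d.kappa v • wedge (d.x u v) (d.n v)
      + d.kappa v • (wedge (deriv d.f u • d.t v) (d.n v)
          + wedge (d.x u v) (-(d.kappa v) • d.t v)))
      - (wedge (deriv d.f u • d.t v) (d.l v) + wedge (d.x u v) (d.t v)) := by
  intro v hv
  rw [deriv_congr_on d.hJ hv (hGv_deriv d u)]
  have hA : HasDerivAt (fun w => wedge (d.x u w) (d.n w))
      (wedge (deriv d.f u • d.t v) (d.n v) + wedge (d.x u v) (deriv d.n v)) v :=
    hasDerivAt_wedge (hxv d u v hv) (hNat d v hv)
  have hB : HasDerivAt (fun w => wedge (d.x u w) (d.l w))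
      (wedge (deriv d.f u • d.t v) (d.l v) + wedge (d.x u v) (d.t v)) v :=
    hasDerivAt_wedge (hxv d u v hv) (hTat d v hv)
  have hS : HasDerivAt (fun w => d.kappa w • wedge (d.x u w) (d.n w))
      (d.kappa v • (wedge (deriv d.f u • d.t v) (d.n v) + wedge (d.x u v) (deriv d.n v))
        + deriv d.kappa v • wedge (d.x u v) (d.n v)) v :=
    (hkat d v hv).smul hA
  have h := (hS.sub hB).deriv
  refine h.trans ?_
  rw [hNP d v hv]
  module

/-- Master formula for the Laplacian of the Gauss map in the wedge basis. -/
lemma hlap : ∀ u ∈ d.I, ∀ v ∈ d.J, d.lapG u v =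
    (-(deriv (deriv (deriv d.f)) u) - deriv d.f u * deriv (deriv d.f) u / d.f u
        + d.kappa v ^ 2 * deriv d.f u / d.f u ^ 2) • wedge (d.l v) (d.t v)
    + (-(deriv (deriv (deriv d.g)) u) - deriv d.f u * deriv (deriv d.g) u / d.f u
        + (1 + d.kappa v ^ 2) * deriv d.g u / d.f u ^ 2) • wedge e4 (d.t v)
    + (-(deriv d.kappa v * deriv d.f u / d.f u ^ 2)) • wedge (d.l v) (d.n v)
    + (-(deriv d.kappa v * deriv d.g u / d.f u ^ 2)) • wedge e4 (d.n v)
    + (-(d.kappa v * deriv d.f u / d.f u ^ 2)) • wedge (d.t v) (d.n v) := by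
  intro u hu v hv
  show -(deriv (fun u' => deriv (fun u'' => d.G u'' v) u') u
    + (1 / (d.f u) ^ 2) • deriv (fun v' => deriv (fun v'' => d.G u v'') v') v
    + (deriv d.f u / d.f u) • deriv (fun u' => d.G u' v) u) = _
  rw [hGuu d v u hu, hGvv d u v hv, hGu_deriv d v u hu]
  funext i j
  simp only [wedge, EllipticData.x, Pi.add_apply, Pi.sub_apply, Pi.smul_apply, Pi.neg_apply,
    smul_eq_mul]
  field_simp
  ring

end Data
end MerAux

lemma algB1 (f f1 f2 f3 g1 : ℝ) (hf : f ≠ 0) (hg1 : g1 ≠ 0)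
    (hPp : f3*g1^2*f^2 + f1*f2*g1^2*f - f1*f2^2*f^2 - f1*g1^4 = 0) :
    -f3 - f1*f2/f = (-(f2^2/g1^2 + g1^2/f^2))*f1 := by
  linear_combination (norm := (field_simp; ring1)) (-1/(f^2*g1^2))*hPp

lemma algB2 (f f1 f2 f3 g1 : ℝ) (hf : f ≠ 0) (hg1 : g1 ≠ 0)
    (hu : f1^2 - g1^2 = 1)
    (hPp : f3*g1^2*f^2 + f1*f2*g1^2*f - f1*f2^2*f^2 - f1*g1^4 = 0) :
    -((f2^2 + f1*f3)/g1 - f1^2*f2^2/g1^3) - f1^2*f2/(f*g1) + g1/f^2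
      = (-(f2^2/g1^2 + g1^2/f^2))*g1 := by
  linear_combination (norm := (field_simp; ring1)) (-f1/(f^2*g1^3))*hPp - (g1/f^2)*hu

lemma algA (f f1 f2 f3 g1 lam : ℝ) (hf : f ≠ 0) (hg1 : g1 ≠ 0)
    (hu : f1^2 - g1^2 = 1)
    (ex1 : -f3 - f1*f2/f = lam*f1)
    (ex2 : -((f2^2 + f1*f3)/g1 - f1^2*f2^2/g1^3) - f1^2*f2/(f*g1) + g1/f^2 = lam*g1) :
    f3*g1^2*f^2 + f1*f2*g1^2*f - f1*f2^2*f^2 - f1*g1^4 = 0 := by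
  linear_combination (norm := (field_simp; ring1)) (f^2*g1^4)*ex1 - (f^2*g1^3*f1)*ex2
    - (g1^2*f^2*f3 + f1*f2*g1^2*f - f1*f2^2*f^2)*hu

lemma algC (f f1 f2 f3 g1 : ℝ) (hf : f ≠ 0) (hg1 : g1 ≠ 0) :
    f * (((f1*f2 + f*f3)*g1 - f*f2*(f1*f2/g1))/g1^2) - f1*g1
      = (f3*g1^2*f^2 + f1*f2*g1^2*f - f1*f2^2*f^2 - f1*g1^4)/(g1^3) := by
  field_simp
  ring

namespace MerAux
open Filter
section Data2
variable (d : EllipticData)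

lemma hG2v : ∀ u ∈ d.I, deriv d.g u ≠ 0 →
    deriv (deriv d.g) u = deriv d.f u * deriv (deriv d.f) u / deriv d.g u := by
  intro u hu hg1
  field_simp
  linear_combination -(hrel1 d u hu)

lemma hG3v : ∀ u ∈ d.I, deriv d.g u ≠ 0 →
    deriv (deriv (deriv d.g)) u =
      ((deriv (deriv d.f) u)^2 + deriv d.f u * deriv (deriv (deriv d.f)) u) / deriv d.g u
        - (deriv d.f u)^2 * (deriv (deriv d.f) u)^2 / (deriv d.g u)^3 := by
  intro u hu hg1
  have h1 := hrel1 d u hu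
  have h2 := hrel2 d u hu
  linear_combination (norm := (field_simp; ring1)) (-1/(deriv d.g u))*h2
    + ((deriv d.f u * deriv (deriv d.f) u + deriv d.g u * deriv (deriv d.g) u)
        / (deriv d.g u)^3)*h1

/-- The ODE is equivalent to the vanishing of the polynomial expression `Pp`. -/
lemma hode_iff : ∀ u ∈ d.I, deriv d.g u ≠ 0 →
    ((d.f u * deriv (fun u' =>
        d.f u' * deriv (deriv d.f) u' / Real.sqrt ((deriv d.f u') ^ 2 - 1)) u
      - deriv d.f u * Real.sqrt ((deriv d.f u) ^ 2 - 1) = 0) ↔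
    (deriv (deriv (deriv d.f)) u * (deriv d.g u)^2 * (d.f u)^2 + deriv d.f u * deriv (deriv d.f) u * (deriv d.g u)^2 * d.f u - deriv d.f u * (deriv (deriv d.f) u)^2 * (d.f u)^2 - deriv d.f u * (deriv d.g u)^4) = 0) := by
  intro u hu hg1
  have hf0 := hfne d u hu
  have hsqrt : ∀ y ∈ d.I, Real.sqrt ((deriv d.f y) ^ 2 - 1) = |deriv d.g y| := by
    intro y hy
    rw [show (deriv d.f y)^2 - 1 = (deriv d.g y)^2 by have := d.hunit y hy; linarith,
      Real.sqrt_sq_eq_abs]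
  have hcont : ContinuousAt (deriv d.g) u :=
    (hg1s d).continuousOn.continuousAt (d.hI.mem_nhds hu)
  have hQ : HasDerivAt (fun y => d.f y * deriv (deriv d.f) y / deriv d.g y) (((deriv d.f u * deriv (deriv d.f) u + d.f u * deriv (deriv (deriv d.f)) u) * deriv d.g u - d.f u * deriv (deriv d.f) u * deriv (deriv d.g) u) / deriv d.g u ^ 2) u :=
    ((hF1at d u hu).mul (hF3at d u hu)).div (hG2at d u hu) hg1
  have halgC := algC (d.f u) (deriv d.f u) (deriv (deriv d.f) u) (deriv (deriv (deriv d.f)) u)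
      (deriv d.g u) hf0 hg1
  rcases lt_or_gt_of_ne hg1 with hneg | hpos
  · have hev : (fun y => d.f y * deriv (deriv d.f) y / Real.sqrt ((deriv d.f y) ^ 2 - 1))
        =ᶠ[nhds u] (fun y => -(d.f y * deriv (deriv d.f) y / deriv d.g y)) := by
      filter_upwards [d.hI.mem_nhds hu, hcont.eventually (eventually_lt_nhds hneg)]
        with y hyI hylt
      rw [hsqrt y hyI, abs_of_neg hylt, div_neg]
    have hder : deriv (fun u' =>
        d.f u' * deriv (deriv d.f) u' / Real.sqrt ((deriv d.f u') ^ 2 - 1)) u = -(((deriv d.f u * deriv (deriv d.f) u + d.f u * deriv (deriv (deriv d.f)) u) * deriv d.g u - d.f u * deriv (deriv d.f) u * deriv (deriv d.g) u) / deriv d.g u ^ 2) :=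
      hev.deriv_eq.trans hQ.neg.deriv
    rw [hder, hsqrt u hu, abs_of_neg hneg]
    have hkey : d.f u * -(((deriv d.f u * deriv (deriv d.f) u + d.f u * deriv (deriv (deriv d.f)) u) * deriv d.g u - d.f u * deriv (deriv d.f) u * deriv (deriv d.g) u) / deriv d.g u ^ 2) - deriv d.f u * -(deriv d.g u)
        = -((deriv (deriv (deriv d.f)) u * (deriv d.g u)^2 * (d.f u)^2 + deriv d.f u * deriv (deriv d.f) u * (deriv d.g u)^2 * d.f u - deriv d.f u * (deriv (deriv d.f) u)^2 * (d.f u)^2 - deriv d.f u * (deriv d.g u)^4) / (deriv d.g u)^3) := by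
      rw [hG2v d u hu hg1]
      linear_combination -halgC
    rw [hkey, neg_eq_zero, div_eq_zero_iff]
    simp [pow_eq_zero_iff, hg1]
  · have hev : (fun y => d.f y * deriv (deriv d.f) y / Real.sqrt ((deriv d.f y) ^ 2 - 1))
        =ᶠ[nhds u] (fun y => d.f y * deriv (deriv d.f) y / deriv d.g y) := by
      filter_upwards [d.hI.mem_nhds hu, hcont.eventually (eventually_gt_nhds hpos)]
        with y hyI hygt
      rw [hsqrt y hyI, abs_of_pos hygt]
    have hder : deriv (fun u' =>
        d.f u' * deriv (deriv d.f) u' / Real.sqrt ((deriv d.f u') ^ 2 - 1)) u = ((deriv d.f u * deriv (deriv d.f) u + d.f u * deriv (deriv (deriv d.f)) u) * deriv d.g u - d.f u * deriv (deriv d.f) u * deriv (deriv d.g) u) / deriv d.g u ^ 2 :=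
      hev.deriv_eq.trans hQ.deriv
    rw [hder, hsqrt u hu, abs_of_pos hpos]
    have hkey : d.f u * (((deriv d.f u * deriv (deriv d.f) u + d.f u * deriv (deriv (deriv d.f)) u) * deriv d.g u - d.f u * deriv (deriv d.f) u * deriv (deriv d.g) u) / deriv d.g u ^ 2) - deriv d.f u * deriv d.g u
        = (deriv (deriv (deriv d.f)) u * (deriv d.g u)^2 * (d.f u)^2 + deriv d.f u * deriv (deriv d.f) u * (deriv d.g u)^2 * d.f u - deriv d.f u * (deriv (deriv d.f) u)^2 * (d.f u)^2 - deriv d.f u * (deriv d.g u)^4) / (deriv d.g u)^3 := by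
      rw [hG2v d u hu hg1]
      linear_combination halgC
    rw [hkey, div_eq_zero_iff]
    simp [pow_eq_zero_iff, hg1]

end Data2
end MerAux

/-- **Meridian surfaces of elliptic type with pointwise 1-type Gauss map of first kind**
(Theorem 5.1): assuming `g′` vanishes either identically or nowhere on `I`, there is a
nowhere-vanishing smooth function `λ` on `I × J` with `ΔG = λ·G` if and only if `κ ≡ 0`
on `J`, `g′` vanishes nowhere on `I`, and `f` satisfies the differential equation
`f·(f·f″/√(f′² − 1))′ − f′·√(f′² − 1) = 0` on `I`. -/
theorem pointwise_one_type_first_kind_elliptic (d : EllipticData)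
    (hgdichotomy : (∀ u ∈ d.I, deriv d.g u = 0) ∨ (∀ u ∈ d.I, deriv d.g u ≠ 0)) :
    (∃ lam : ℝ → ℝ → ℝ,
        ContDiffOn ℝ (⊤ : ℕ∞) (fun p : ℝ × ℝ => lam p.1 p.2) (d.I ×ˢ d.J) ∧
        (∀ u ∈ d.I, ∀ v ∈ d.J, lam u v ≠ 0) ∧
        (∀ u ∈ d.I, ∀ v ∈ d.J, d.lapG u v = lam u v • d.G u v)) ↔
      ((∀ v ∈ d.J, d.kappa v = 0) ∧
       (∀ u ∈ d.I, deriv d.g u ≠ 0) ∧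
       (∀ u ∈ d.I,
          d.f u * deriv (fun u' =>
              d.f u' * deriv (deriv d.f) u' / Real.sqrt ((deriv d.f u') ^ 2 - 1)) u
            - deriv d.f u * Real.sqrt ((deriv d.f u) ^ 2 - 1) = 0)) := by
  obtain ⟨u0, hu0⟩ := d.hIne
  obtain ⟨v0, hv0⟩ := d.hJne
  constructor
  · rintro ⟨lam, hsm, hne, heq⟩
    have hext : ∀ u ∈ d.I, ∀ v ∈ d.J,
        (-(deriv (deriv (deriv d.f)) u) - deriv d.f u * deriv (deriv d.f) u / d.f u
          + d.kappa v ^ 2 * deriv d.f u / d.f u ^ 2) = lam u v * deriv d.f u ∧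
        (-(deriv (deriv (deriv d.g)) u) - deriv d.f u * deriv (deriv d.g) u / d.f u
          + (1 + d.kappa v ^ 2) * deriv d.g u / d.f u ^ 2) = lam u v * deriv d.g u ∧
        -(d.kappa v * deriv d.f u / d.f u ^ 2) = 0 := by
      intro u hu v hv
      have h := heq u hu v hv
      rw [MerAux.hlap d u hu v hv, MerAux.hGfun d v u, smul_add, smul_smul, smul_smul] at h
      obtain ⟨A1, A2, A3, A4, A5⟩ := MerAux.coeff_ext (d.l v) (d.t v) (d.n v)
        (MerAux.dll d v hv) (MerAux.dtt d v hv) (MerAux.dnn d v hv) (MerAux.dlt d v hv)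
        (MerAux.dln d v hv) (MerAux.dtn d v hv) (MerAux.dle d v hv) (MerAux.dte d v hv)
        (MerAux.dne d v hv) h
      exact ⟨A1, A2, A5⟩
    have hk0 : ∀ v ∈ d.J, d.kappa v = 0 := by
      intro v hv
      obtain ⟨-, -, A5⟩ := hext u0 hu0 v hv
      rw [neg_eq_zero, div_eq_zero_iff] at A5
      rcases A5 with h5 | h5
      · rcases mul_eq_zero.mp h5 with h6 | h6
        · exact h6
        · exact absurd h6 (MerAux.hF1ne d u0 hu0)
      · exact absurd h5 (pow_ne_zero 2 (MerAux.hfne d u0 hu0))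
    have hk'0 : ∀ v ∈ d.J, deriv d.kappa v = 0 := fun v hv =>
      MerAux.eq_zero_of_const_on d.hJ hv hk0 (MerAux.hkat d v hv)
    have hg1ne : ∀ u ∈ d.I, deriv d.g u ≠ 0 := by
      rcases hgdichotomy with hzero | hnev
      · exfalso
        have hG2z : ∀ u ∈ d.I, deriv (deriv d.g) u = 0 := fun u hu =>
          MerAux.eq_zero_of_const_on d.hI hu hzero (MerAux.hG2at d u hu)
        have hF2z : ∀ u ∈ d.I, deriv (deriv d.f) u = 0 := by
          intro u hu
          have h1 := MerAux.hrel1 d u hu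
          rw [hzero u hu] at h1
          rcases mul_eq_zero.mp (by linarith : deriv d.f u * deriv (deriv d.f) u = 0) with
            h2 | h2
          · exact absurd h2 (MerAux.hF1ne d u hu)
          · exact h2
        have hF3z : deriv (deriv (deriv d.f)) u0 = 0 := by
          have h2 := MerAux.hrel2 d u0 hu0
          rw [hzero u0 hu0, hG2z u0 hu0, hF2z u0 hu0] at h2
          rcases mul_eq_zero.mp (by nlinarith : deriv d.f u0 * deriv (deriv (deriv d.f)) u0
              = 0) with h3 | h3
          · exact absurd h3 (MerAux.hF1ne d u0 hu0)
          · exact h3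
        obtain ⟨A1, -, -⟩ := hext u0 hu0 v0 hv0
        rw [hk0 v0 hv0, hF2z u0 hu0, hF3z] at A1
        have h0 : lam u0 v0 * deriv d.f u0 = 0 := by linear_combination -A1
        exact mul_ne_zero (hne u0 hu0 v0 hv0) (MerAux.hF1ne d u0 hu0) h0
      · exact hnev
    refine ⟨hk0, hg1ne, ?_⟩
    intro u hu
    rw [MerAux.hode_iff d u hu (hg1ne u hu)]
    obtain ⟨A1, A2, -⟩ := hext u hu v0 hv0
    rw [hk0 v0 hv0] at A1 A2
    rw [MerAux.hG2v d u hu (hg1ne u hu), MerAux.hG3v d u hu (hg1ne u hu)] at A2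
    have ex1 : -(deriv (deriv (deriv d.f)) u) - deriv d.f u * deriv (deriv d.f) u / d.f u
        = lam u v0 * deriv d.f u := by linear_combination A1
    have ex2 : -(((deriv (deriv d.f) u)^2 + deriv d.f u * deriv (deriv (deriv d.f)) u)
          / deriv d.g u - (deriv d.f u)^2 * (deriv (deriv d.f) u)^2 / (deriv d.g u)^3)
        - (deriv d.f u)^2 * deriv (deriv d.f) u / (d.f u * deriv d.g u)
        + deriv d.g u / (d.f u)^2 = lam u v0 * deriv d.g u := by linear_combination A2
    have hPp := algA (d.f u) (deriv d.f u) (deriv (deriv d.f) u)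
      (deriv (deriv (deriv d.f)) u) (deriv d.g u) (lam u v0) (MerAux.hfne d u hu)
      (hg1ne u hu) (d.hunit u hu) ex1 ex2
    linear_combination hPp
  · rintro ⟨hk0, hg1ne, hode⟩
    have hk'0 : ∀ v ∈ d.J, deriv d.kappa v = 0 := fun v hv =>
      MerAux.eq_zero_of_const_on d.hJ hv hk0 (MerAux.hkat d v hv)
    have hPp : ∀ u ∈ d.I, deriv (deriv (deriv d.f)) u * (deriv d.g u)^2 * (d.f u)^2 + deriv d.f u * deriv (deriv d.f) u * (deriv d.g u)^2 * d.f u - deriv d.f u * (deriv (deriv d.f) u)^2 * (d.f u)^2 - deriv d.f u * (deriv d.g u)^4 = 0 := by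
      intro u hu
      have h := (MerAux.hode_iff d u hu (hg1ne u hu)).mp (hode u hu)
      linear_combination h
    refine ⟨fun u _ => -((deriv (deriv d.f) u / deriv d.g u)^2 + (deriv d.g u / d.f u)^2), ?_, ?_, ?_⟩
    · have h1 : ContDiffOn ℝ (⊤ : ℕ∞) (fun u => -((deriv (deriv d.f) u / deriv d.g u)^2 + (deriv d.g u / d.f u)^2)) d.I := by
        have ha := (MerAux.hf2s d).div (MerAux.hg1s d) hg1ne
        have hb := (MerAux.hg1s d).div d.hf (fun u hu => MerAux.hfne d u hu)
        exact ((ha.pow 2).add (hb.pow 2)).neg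
      exact h1.comp contDiff_fst.contDiffOn (fun p hp => hp.1)
    · intro u hu v hv
      have hdn : deriv d.g u / d.f u ≠ 0 := div_ne_zero (hg1ne u hu) (MerAux.hfne d u hu)
      have hgpos : (deriv d.g u / d.f u)^2 > 0 := by positivity
      nlinarith [sq_nonneg (deriv (deriv d.f) u / deriv d.g u)]
    · intro u hu v hv
      rw [MerAux.hlap d u hu v hv, MerAux.hGfun d v u, hk0 v hv, hk'0 v hv]
      have hB1 := algB1 (d.f u) (deriv d.f u) (deriv (deriv d.f) u)
        (deriv (deriv (deriv d.f)) u) (deriv d.g u) (MerAux.hfne d u hu) (hg1ne u hu)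
        (hPp u hu)
      have hB2 := algB2 (d.f u) (deriv d.f u) (deriv (deriv d.f) u)
        (deriv (deriv (deriv d.f)) u) (deriv d.g u) (MerAux.hfne d u hu) (hg1ne u hu)
        (d.hunit u hu) (hPp u hu)
      have e1 : (-(deriv (deriv (deriv d.f)) u) - deriv d.f u * deriv (deriv d.f) u / d.f u
          + (0:ℝ) ^ 2 * deriv d.f u / d.f u ^ 2) = (-((deriv (deriv d.f) u / deriv d.g u)^2 + (deriv d.g u / d.f u)^2)) * deriv d.f u := by
        linear_combination hB1
      have e2 : (-(deriv (deriv (deriv d.g)) u) - deriv d.f u * deriv (deriv d.g) u / d.f u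
          + (1 + (0:ℝ) ^ 2) * deriv d.g u / d.f u ^ 2) = (-((deriv (deriv d.f) u / deriv d.g u)^2 + (deriv d.g u / d.f u)^2)) * deriv d.g u := by
        rw [MerAux.hG2v d u hu (hg1ne u hu), MerAux.hG3v d u hu (hg1ne u hu)]
        linear_combination hB2
      rw [e1, e2]
      have hz1 : -((0:ℝ) * deriv d.f u / d.f u ^ 2) = 0 := by ring
      have hz2 : -((0:ℝ) * deriv d.g u / d.f u ^ 2) = 0 := by ring
      rw [hz1, hz2, zero_smul, zero_smul, zero_smul, add_zero, add_zero, add_zero]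
      rw [smul_add, smul_smul, smul_smul]
end
end
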